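/- arXiv:2005.01643 — 9 statements merged into one kernel-verified Lean document; each statement's English description precedes it below -/
import Mathlib

section
/- Let M be a finite-horizon MDP with H+1 decision steps (t = 0,…,H), let π* be a deterministic expert policy, and let π be a (possibly stochastic) learned policy. Suppose that for every t ∈ {0,…,H}, the probability of a mistake under the expert's state distribution satisfies E_{s ∼ d_t^{π*}}[1 − π(π*(s)|s)] ≤ ε. Then the expected number of mistakes of π under its own trajectory distribution satisfies ℓ(π) = E_{τ ∼ p_π}[Σ_{t=0}^{H} 𝟙(a_t ≠ π*(s_t))] ≤ ε·(H+1)(H+2)/2, and in particular ℓ(π) ≤ (H+1)²·ε (behavioral cloning error bound, upper-bound part of Theorem 1). -/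
/-!
A mistake at step `t` is preceded by a first mistake at some `t' ≤ t`, so
`ℓ(π) ≤ ∑_t ∑_{t' ≤ t} P_π(first mistake at t')`. Before its first mistake the learner plays the
expert's actions, each with probability at most one, so a prefix `s_0, a_0, …, s_{t'}, a_{t'}`
whose first mistake is at `t'` has probability at most (probability of `s_0, …, s_{t'}` under `π*`)
times `π(a_{t'} | s_{t'})`. Summing over `a_{t'} ≠ π*(s_{t'})`, after summing out the steps after
`t'`, gives `P_π(first mistake at t') ≤ E_{s ∼ d_{t'}^{π*}}[1 - π(π*(s)|s)] ≤ ε`; finally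
`∑_t (t + 1) ε = ε (H + 1)(H + 2) / 2`.
-/

open Finset

/-- Probability of a trajectory `τ = (s_0, a_0, …, s_H, a_H)` in a finite-horizon MDP
with `H + 1` decision steps, initial distribution `d0`, transition kernel `T` and
policy `π`. -/
noncomputable def trajP {S A : Type} [Fintype S] [Fintype A] (H : ℕ)
    (d0 : S → ℝ) (T : S → A → S → ℝ) (π : S → A → ℝ)
    (τ : (Fin (H + 1) → S) × (Fin (H + 1) → A)) : ℝ :=
  d0 (τ.1 0) * (∏ t : Fin (H + 1), π (τ.1 t) (τ.2 t)) *
    ∏ t : Fin H, T (τ.1 t.castSucc) (τ.2 t.castSucc) (τ.1 t.succ)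

/-- Time-indexed state distribution `d_t^π(s)`: probability that `s_t = s` under the
trajectory distribution `p_π`. -/
noncomputable def stateDistAt {S A : Type} [Fintype S] [Fintype A] [DecidableEq S] (H : ℕ)
    (d0 : S → ℝ) (T : S → A → S → ℝ) (π : S → A → ℝ) (t : Fin (H + 1)) (s : S) : ℝ :=
  ∑ τ : (Fin (H + 1) → S) × (Fin (H + 1) → A),
    if τ.1 t = s then trajP H d0 T π τ else 0

/-- A deterministic policy viewed as a stochastic policy. -/
noncomputable def detPolicy {S A : Type} [DecidableEq A] (πstar : S → A) : S → A → ℝ :=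
  fun _s a => if a = πstar _s then 1 else 0

/-- Expected number of mistakes `ℓ(π) = E_{τ ∼ p_π}[Σ_{t=0}^H 𝟙(a_t ≠ π*(s_t))]`. -/
noncomputable def mistakes {S A : Type} [Fintype S] [Fintype A] [DecidableEq A] (H : ℕ)
    (d0 : S → ℝ) (T : S → A → S → ℝ) (π : S → A → ℝ) (πstar : S → A) : ℝ :=
  ∑ τ : (Fin (H + 1) → S) × (Fin (H + 1) → A),
    trajP H d0 T π τ *
      ((univ.filter fun t : Fin (H + 1) => τ.2 t ≠ πstar (τ.1 t)).card : ℝ)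

lemma sum_fin_succ_pi_eq_sum_snoc {X M : Type*} [Fintype X] [AddCommMonoid M] (n : ℕ)
    (f : (Fin (n + 1) → X) → M) :
    ∑ g, f g = ∑ g : Fin n → X, ∑ x, f (Fin.snoc g x) := by
  rw [← (Fin.snocEquiv fun _ => X).sum_comp, Fintype.sum_prod_type_right]
  rfl

section Trajectories

variable {S A : Type} [Fintype S] [Fintype A] (d0 : S → ℝ) (T : S → A → S → ℝ) (ρ : S → A → ℝ)

lemma trajP_nonneg (hd0 : ∀ s, 0 ≤ d0 s) (hT0 : ∀ s a s', 0 ≤ T s a s')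
    (hρ0 : ∀ s a, 0 ≤ ρ s a) {n : ℕ} (τ : (Fin (n + 1) → S) × (Fin (n + 1) → A)) :
    0 ≤ trajP n d0 T ρ τ := by
  unfold trajP
  exact mul_nonneg (mul_nonneg (hd0 _) (prod_nonneg fun _ _ => hρ0 _ _))
    (prod_nonneg fun _ _ => hT0 _ _ _)

lemma trajP_snoc {n : ℕ} (σ : Fin (n + 1) → S) (α : Fin (n + 1) → A) (s : S) (a : A) :
    trajP (n + 1) d0 T ρ (Fin.snoc σ s, Fin.snoc α a) =
      trajP n d0 T ρ (σ, α) * (T (σ (Fin.last n)) (α (Fin.last n)) s * ρ s a) := by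
  simp only [trajP, Fin.prod_univ_castSucc (n := n + 1), Fin.prod_univ_castSucc (n := n),
    Fin.snoc_castSucc, Fin.snoc_last, Fin.succ_castSucc, Fin.succ_last]
  rw [show (0 : Fin (n + 2)) = Fin.castSucc 0 from rfl, Fin.snoc_castSucc]
  ring

lemma sum_mul_trajP_succ (hT1 : ∀ s a, ∑ s', T s a s' = 1) (hρ1 : ∀ s, ∑ a, ρ s a = 1) {n : ℕ}
    (φ : (Fin (n + 1) → S) × (Fin (n + 1) → A) → ℝ) :
    ∑ τ, φ (Fin.init τ.1, Fin.init τ.2) * trajP (n + 1) d0 T ρ τ =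
      ∑ τ, φ τ * trajP n d0 T ρ τ := by
  simp only [Fintype.sum_prod_type, sum_fin_succ_pi_eq_sum_snoc (n := n + 1),
    Fin.init_snoc, trajP_snoc]
  refine sum_congr rfl fun σ _ => ?_
  rw [sum_comm]
  refine sum_congr rfl fun α _ => ?_
  simp only [← mul_sum, hρ1, hT1, mul_one]

lemma sum_mul_trajP_take (hT1 : ∀ s a, ∑ s', T s a s' = 1) (hρ1 : ∀ s, ∑ a, ρ s a = 1)
    {t n : ℕ} (h : t ≤ n) (φ : (Fin (t + 1) → S) × (Fin (t + 1) → A) → ℝ) :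
    ∑ τ, φ (Fin.take (t + 1) (Nat.succ_le_succ h) τ.1, Fin.take (t + 1) (Nat.succ_le_succ h) τ.2) *
        trajP n d0 T ρ τ =
      ∑ τ, φ τ * trajP t d0 T ρ τ := by
  induction n, h using Nat.le_induction with
  | base => simp only [Fin.take_eq_self]
  | succ n hn ih =>
    rw [← ih]
    exact sum_mul_trajP_succ d0 T ρ hT1 hρ1 fun τ =>
      φ (Fin.take (t + 1) (Nat.succ_le_succ hn) τ.1, Fin.take (t + 1) (Nat.succ_le_succ hn) τ.2)

lemma sum_stateDistAt_mul [DecidableEq S] {H : ℕ} (t : Fin (H + 1)) (f : S → ℝ) :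
    ∑ s, stateDistAt H d0 T ρ t s * f s = ∑ τ, f (τ.1 t) * trajP H d0 T ρ τ := by
  simp only [stateDistAt, sum_mul, ite_mul, zero_mul]
  rw [sum_comm]
  simp only [sum_ite_eq, mem_univ, if_true, mul_comm]

end Trajectories

section PathWeight

variable {S A : Type} (d0 : S → ℝ) (T : S → A → S → ℝ)

def pathWeight (ρ : S → A → ℝ) {m : ℕ} (σ : Fin (m + 1) → S) (α : Fin m → A) : ℝ :=
  d0 (σ 0) * ∏ u : Fin m, ρ (σ u.castSucc) (α u) * T (σ u.castSucc) (α u) (σ u.succ)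

lemma trajP_snoc_actions [Fintype S] [Fintype A] (ρ : S → A → ℝ) {m : ℕ} (σ : Fin (m + 1) → S)
    (α : Fin m → A) (a : A) :
    trajP m d0 T ρ (σ, Fin.snoc α a) = pathWeight d0 T ρ σ α * ρ (σ (Fin.last m)) a := by
  simp only [trajP, pathWeight, Fin.prod_univ_castSucc, Fin.snoc_castSucc, Fin.snoc_last,
    prod_mul_distrib]
  ring

lemma pathWeight_nonneg (hd0 : ∀ s, 0 ≤ d0 s) (hT0 : ∀ s a s', 0 ≤ T s a s') {ρ : S → A → ℝ}
    (hρ0 : ∀ s a, 0 ≤ ρ s a) {m : ℕ} (σ : Fin (m + 1) → S) (α : Fin m → A) :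
    0 ≤ pathWeight d0 T ρ σ α :=
  mul_nonneg (hd0 _) (prod_nonneg fun _ _ => mul_nonneg (hρ0 _ _) (hT0 _ _ _))

lemma pathWeight_mono (hd0 : ∀ s, 0 ≤ d0 s) (hT0 : ∀ s a s', 0 ≤ T s a s') {ρ ρ' : S → A → ℝ}
    (hρ0 : ∀ s a, 0 ≤ ρ s a) {m : ℕ} (σ : Fin (m + 1) → S) (α : Fin m → A)
    (hle : ∀ u, ρ (σ u.castSucc) (α u) ≤ ρ' (σ u.castSucc) (α u)) :
    pathWeight d0 T ρ σ α ≤ pathWeight d0 T ρ' σ α := by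
  unfold pathWeight
  gcongr with u
  · exact hd0 _
  · exact fun u _ => mul_nonneg (hρ0 _ _) (hT0 _ _ _)
  · exact hT0 _ _ _
  · exact hle u

end PathWeight

section DetPolicy

variable {S A : Type} [DecidableEq A] (πstar : S → A)

lemma detPolicy_nonneg (s : S) (a : A) : 0 ≤ detPolicy πstar s a := by
  unfold detPolicy; split_ifs <;> norm_num

lemma sum_detPolicy [Fintype A] (s : S) : ∑ a, detPolicy πstar s a = 1 := by
  simp [detPolicy]

end DetPolicy

section Mistakes

variable {S A : Type} (πstar : S → A)

def FirstMistakeAt {n : ℕ} (τ : (Fin (n + 1) → S) × (Fin (n + 1) → A)) (t : Fin (n + 1)) :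
    Prop :=
  (∀ u < t, τ.2 u = πstar (τ.1 u)) ∧ τ.2 t ≠ πstar (τ.1 t)

instance [DecidableEq A] {n : ℕ} (τ : (Fin (n + 1) → S) × (Fin (n + 1) → A)) (t : Fin (n + 1)) :
    Decidable (FirstMistakeAt πstar τ t) :=
  inferInstanceAs (Decidable (_ ∧ _))

lemma exists_firstMistakeAt_le {n : ℕ} {τ : (Fin (n + 1) → S) × (Fin (n + 1) → A)}
    {t : Fin (n + 1)} (ht : τ.2 t ≠ πstar (τ.1 t)) : ∃ t' ≤ t, FirstMistakeAt πstar τ t' := by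
  induction t using WellFoundedLT.induction with
  | ind t ih =>
    by_cases hbefore : ∀ u < t, τ.2 u = πstar (τ.1 u)
    · exact ⟨t, le_rfl, hbefore, ht⟩
    · push Not at hbefore
      obtain ⟨u, hut, hu⟩ := hbefore
      obtain ⟨t', ht'u, ht'⟩ := ih u hut hu
      exact ⟨t', ht'u.trans hut.le, ht'⟩

lemma ite_ne_le_sum_Iic_firstMistakeAt [DecidableEq A] {n : ℕ}
    (τ : (Fin (n + 1) → S) × (Fin (n + 1) → A)) (t : Fin (n + 1)) :
    (if τ.2 t ≠ πstar (τ.1 t) then (1 : ℝ) else 0) ≤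
      ∑ t' ∈ Iic t, if FirstMistakeAt πstar τ t' then 1 else 0 := by
  have hnonneg : ∀ t', 0 ≤ if FirstMistakeAt πstar τ t' then (1 : ℝ) else 0 :=
    fun _ => by positivity
  split_ifs with ht
  · obtain ⟨t', ht't, ht'⟩ := exists_firstMistakeAt_le πstar ht
    calc (1 : ℝ) = if FirstMistakeAt πstar τ t' then 1 else 0 := (if_pos ht').symm
      _ ≤ _ := single_le_sum (fun t' _ => hnonneg t') (mem_Iic.2 ht't)
  · exact sum_nonneg fun t' _ => hnonneg t'

lemma firstMistakeAt_take_iff {n : ℕ} (τ : (Fin (n + 1) → S) × (Fin (n + 1) → A))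
    (t : Fin (n + 1)) :
    FirstMistakeAt πstar (Fin.take (t + 1) t.isLt τ.1, Fin.take (t + 1) t.isLt τ.2) (Fin.last t) ↔
      FirstMistakeAt πstar τ t := by
  have hlast : Fin.castLE t.isLt (Fin.last t) = t := Fin.ext rfl
  simp only [FirstMistakeAt, Fin.take_apply, hlast]
  refine and_congr_left' ⟨fun h u hu => ?_, fun h u hu => h _ ?_⟩
  · have hu' : Fin.castLE t.isLt ⟨u, by omega⟩ = u := Fin.ext rfl
    simpa only [hu'] using h ⟨u, by omega⟩ (Fin.mk_lt_mk.2 hu)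
  · simpa [Fin.lt_def] using hu

lemma firstMistakeAt_snoc_last_iff {m : ℕ} (σ : Fin (m + 1) → S) (α : Fin m → A) (a : A) :
    FirstMistakeAt πstar (σ, Fin.snoc α a) (Fin.last m) ↔
      (∀ u : Fin m, α u = πstar (σ u.castSucc)) ∧ a ≠ πstar (σ (Fin.last m)) := by
  simp [FirstMistakeAt, Fin.forall_fin_succ', Fin.castSucc_lt_last]

end Mistakes

section Bounds

variable {S A : Type} [Fintype S] [Fintype A] [DecidableEq A]
  (d0 : S → ℝ) (T : S → A → S → ℝ) (πstar : S → A) (π : S → A → ℝ)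

lemma sum_firstMistakeAt_last_mul_trajP_le (hd0 : ∀ s, 0 ≤ d0 s) (hT0 : ∀ s a s', 0 ≤ T s a s')
    (hπ0 : ∀ s a, 0 ≤ π s a) (hπ1 : ∀ s, ∑ a, π s a = 1) (m : ℕ) :
    ∑ τ, (if FirstMistakeAt πstar τ (Fin.last m) then 1 else 0) * trajP m d0 T π τ ≤
      ∑ τ, (1 - π (τ.1 (Fin.last m)) (πstar (τ.1 (Fin.last m)))) *
        trajP m d0 T (detPolicy πstar) τ := by
  rw [Fintype.sum_prod_type, Fintype.sum_prod_type]
  refine sum_le_sum fun σ _ => ?_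
  rw [sum_fin_succ_pi_eq_sum_snoc, sum_fin_succ_pi_eq_sum_snoc]
  refine sum_le_sum fun α _ => ?_
  simp only [firstMistakeAt_snoc_last_iff, trajP_snoc_actions]
  set s := σ (Fin.last m)
  have hπ_le_one (x : S) (a : A) : π x a ≤ 1 :=
    hπ1 x ▸ single_le_sum (fun a _ => hπ0 x a) (mem_univ a)
  have hexpert : ∑ a, (1 - π s (πstar s)) * (pathWeight d0 T (detPolicy πstar) σ α *
      detPolicy πstar s a) = pathWeight d0 T (detPolicy πstar) σ α * (1 - π s (πstar s)) := by
    rw [← mul_sum, ← mul_sum, sum_detPolicy]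
    ring
  rw [hexpert]
  by_cases hα : ∀ u, α u = πstar (σ u.castSucc)
  · have hlearner : ∑ a, (if a ≠ πstar s then 1 else 0) * (pathWeight d0 T π σ α * π s a) =
        pathWeight d0 T π σ α * (1 - π s (πstar s)) := by
      simp only [ite_mul, one_mul, zero_mul, ← mul_ite_zero, ← mul_sum]
      rw [← sum_filter, filter_ne', sum_erase_eq_sub (mem_univ _), hπ1]
    simp only [eq_true hα, true_and, hlearner]
    refine mul_le_mul_of_nonneg_right ?_ (sub_nonneg.2 (hπ_le_one _ _))
    refine pathWeight_mono d0 T hd0 hT0 hπ0 σ α fun u => ?_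
    rw [hα u, detPolicy, if_pos rfl]
    exact hπ_le_one _ _
  · simp only [eq_false hα, false_and, if_false, zero_mul, sum_const_zero]
    exact mul_nonneg (pathWeight_nonneg d0 T hd0 hT0 (detPolicy_nonneg πstar) σ α)
      (sub_nonneg.2 (hπ_le_one _ _))

lemma sum_firstMistakeAt_mul_trajP_le [DecidableEq S] (hd0 : ∀ s, 0 ≤ d0 s)
    (hT0 : ∀ s a s', 0 ≤ T s a s') (hT1 : ∀ s a, ∑ s', T s a s' = 1)
    (hπ0 : ∀ s a, 0 ≤ π s a) (hπ1 : ∀ s, ∑ a, π s a = 1) {H : ℕ} (t : Fin (H + 1)) :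
    ∑ τ, (if FirstMistakeAt πstar τ t then 1 else 0) * trajP H d0 T π τ ≤
      ∑ s, stateDistAt H d0 T (detPolicy πstar) t s * (1 - π s (πstar s)) := by
  have ht : (t : ℕ) ≤ H := Nat.lt_succ_iff.mp t.isLt
  have hlast : Fin.castLE t.isLt (Fin.last t) = t := Fin.ext rfl
  calc ∑ τ, (if FirstMistakeAt πstar τ t then 1 else 0) * trajP H d0 T π τ
      = ∑ τ, (if FirstMistakeAt πstar τ (Fin.last t) then 1 else 0) * trajP t d0 T π τ := by
        simp only [← sum_mul_trajP_take d0 T π hT1 hπ1 ht, firstMistakeAt_take_iff]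
    _ ≤ ∑ τ, (1 - π (τ.1 (Fin.last t)) (πstar (τ.1 (Fin.last t)))) *
          trajP t d0 T (detPolicy πstar) τ :=
        sum_firstMistakeAt_last_mul_trajP_le d0 T πstar π hd0 hT0 hπ0 hπ1 t
    _ = ∑ s, stateDistAt H d0 T (detPolicy πstar) t s * (1 - π s (πstar s)) := by
        rw [sum_stateDistAt_mul, ← sum_mul_trajP_take d0 T _ hT1 (sum_detPolicy πstar) ht]
        simp only [Fin.take_apply, hlast]

lemma mistakes_le_sum_firstMistakeAt (hd0 : ∀ s, 0 ≤ d0 s) (hT0 : ∀ s a s', 0 ≤ T s a s')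
    (hπ0 : ∀ s a, 0 ≤ π s a) (H : ℕ) :
    mistakes H d0 T π πstar ≤ ∑ t : Fin (H + 1), ∑ t' ∈ Iic t,
      ∑ τ, (if FirstMistakeAt πstar τ t' then 1 else 0) * trajP H d0 T π τ := by
  calc mistakes H d0 T π πstar
      = ∑ t, ∑ τ, (if τ.2 t ≠ πstar (τ.1 t) then 1 else 0) * trajP H d0 T π τ := by
        simp only [mistakes, card_filter, Nat.cast_sum, Nat.cast_ite, Nat.cast_one,
          Nat.cast_zero, mul_sum]
        rw [sum_comm]
        simp only [mul_comm]
    _ ≤ ∑ t, ∑ τ, (∑ t' ∈ Iic t, if FirstMistakeAt πstar τ t' then 1 else 0) *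
          trajP H d0 T π τ := by
        gcongr with t _ τ _
        · exact trajP_nonneg d0 T π hd0 hT0 hπ0 τ
        · exact ite_ne_le_sum_Iic_firstMistakeAt πstar τ t
    _ = _ := by
        simp only [sum_mul]
        exact sum_congr rfl fun t _ => sum_comm

end Bounds

lemma sum_fin_val_add_one (n : ℕ) : ∑ t : Fin (n + 1), ((t : ℝ) + 1) = (n + 1) * (n + 2) / 2 := by
  induction n with
  | zero => norm_num
  | succ n ih =>
    rw [Fin.sum_univ_castSucc]
    simp only [Fin.val_castSucc, ih, Fin.val_last]
    push_cast
    ring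

theorem behavioral_cloning_error_upper_bound_general
    {S A : Type} [Fintype S] [Fintype A] [DecidableEq S] [DecidableEq A]
    (H : ℕ) (d0 : S → ℝ) (T : S → A → S → ℝ)
    (πstar : S → A) (π : S → A → ℝ) (ε : ℝ)
    (hd00 : ∀ s, 0 ≤ d0 s)
    (hT0 : ∀ s a s', 0 ≤ T s a s') (hT1 : ∀ s a, ∑ s', T s a s' = 1)
    (hπ0 : ∀ s a, 0 ≤ π s a) (hπ1 : ∀ s, ∑ a, π s a = 1)
    (hmistake : ∀ t : Fin (H + 1),
      ∑ s, stateDistAt H d0 T (detPolicy πstar) t s * (1 - π s (πstar s)) ≤ ε) :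
    mistakes H d0 T π πstar ≤ ε * ((H : ℝ) + 1) * ((H : ℝ) + 2) / 2 ∧
      mistakes H d0 T π πstar ≤ ((H : ℝ) + 1) ^ 2 * ε := by
  have hfirst (t : Fin (H + 1)) :
      ∑ τ, (if FirstMistakeAt πstar τ t then 1 else 0) * trajP H d0 T π τ ≤ ε :=
    (sum_firstMistakeAt_mul_trajP_le d0 T πstar π hd00 hT0 hT1 hπ0 hπ1 t).trans (hmistake t)
  have hε : 0 ≤ ε :=
    (sum_nonneg fun τ _ => mul_nonneg (by positivity) (trajP_nonneg d0 T π hd00 hT0 hπ0 τ)).trans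
      (hfirst 0)
  have hbound : mistakes H d0 T π πstar ≤ ε * ((H : ℝ) + 1) * ((H : ℝ) + 2) / 2 :=
    calc mistakes H d0 T π πstar
        ≤ ∑ t : Fin (H + 1), ∑ t' ∈ Iic t, ε :=
          (mistakes_le_sum_firstMistakeAt d0 T πstar π hd00 hT0 hπ0 H).trans
            (by gcongr with t _ t' _; exact hfirst t')
      _ = ε * ((H : ℝ) + 1) * ((H : ℝ) + 2) / 2 := by
          simp only [sum_const, Fin.card_Iic, nsmul_eq_mul, ← sum_mul, Nat.cast_add, Nat.cast_one,
            sum_fin_val_add_one]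
          ring
  exact ⟨hbound, hbound.trans (by nlinarith [mul_nonneg hε (H.cast_nonneg : (0 : ℝ) ≤ H)])⟩

/-- **Behavioral cloning error bound (upper-bound part of Theorem 1).**
If the per-step mistake probability of `π` under the expert's state distribution is at
most `ε` at every time step, then the expected number of mistakes of `π` under its own
trajectory distribution is at most `ε·(H+1)(H+2)/2 ≤ (H+1)²·ε`. -/
theorem behavioral_cloning_error_upper_bound
    {S A : Type} [Fintype S] [Fintype A] [DecidableEq S] [DecidableEq A]
    (H : ℕ) (d0 : S → ℝ) (T : S → A → S → ℝ)
    (πstar : S → A) (π : S → A → ℝ) (ε : ℝ)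
    (hd00 : ∀ s, 0 ≤ d0 s) (hd01 : ∑ s, d0 s = 1)
    (hT0 : ∀ s a s', 0 ≤ T s a s') (hT1 : ∀ s a, ∑ s', T s a s' = 1)
    (hπ0 : ∀ s a, 0 ≤ π s a) (hπ1 : ∀ s, ∑ a, π s a = 1)
    (hmistake : ∀ t : Fin (H + 1),
      ∑ s, stateDistAt H d0 T (detPolicy πstar) t s * (1 - π s (πstar s)) ≤ ε) :
    mistakes H d0 T π πstar ≤ ε * ((H : ℝ) + 1) * ((H : ℝ) + 2) / 2 ∧
      mistakes H d0 T π πstar ≤ ((H : ℝ) + 1) ^ 2 * ε :=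
  behavioral_cloning_error_upper_bound_general H d0 T πstar π ε hd00 hT0 hT1 hπ0 hπ1 hmistake
end

section
/- Let M be a finite MDP, let H ≥ 0 be a finite horizon, and let π and π_β be policies such that π_β(a|s) > 0 whenever π(a|s) > 0. Then the per-decision importance sampling estimator is unbiased: E_{τ ∼ p_{π_β}}[ Σ_{t=0}^{H} γ^t (∏_{t'=0}^{t} π(a_{t'}|s_{t'})/π_β(a_{t'}|s_{t'})) · r(s_t,a_t) ] = J(π); that is, importance weights for time steps after t may be dropped from the weight multiplying the reward at time t without introducing bias. -/
open Finset

/-- Finite-horizon expected discounted return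
`J(π) = E_{τ ∼ p_π}[Σ_{t=0}^H γ^t r(s_t, a_t)]`. -/
noncomputable def Jret {S A : Type} [Fintype S] [Fintype A] (H : ℕ)
    (d0 : S → ℝ) (T : S → A → S → ℝ) (π : S → A → ℝ) (r : S → A → ℝ) (γ : ℝ) : ℝ :=
  ∑ τ : (Fin (H + 1) → S) × (Fin (H + 1) → A),
    trajP H d0 T π τ * ∑ t : Fin (H + 1), γ ^ (t : ℕ) * r (τ.1 t) (τ.2 t)

/-! Multiplying `p_{π_β}(τ)` by the ratios `∏_{t' ≤ t} π/π_β` gives the probability of `τ` under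
the non-stationary policy that plays `π` up to time `t` and `π_β` afterwards; the support condition
makes `π_β · (π/π_β) = π` also where `π_β` vanishes. The reward at time `t` depends on `(s_t, a_t)`
only, and its expectation does not see the policy after time `t`: summing out the last state-action
pair of a trajectory contributes `∑_{s'} T(s'|s,a) ∑_{a'} ρ(a'|s') = 1`. Hence every term of the
estimator has the same expectation as under `π`. -/

section

variable {S A : Type}

theorem Fin.sum_univ_pi_snoc [Fintype S] {M : Type*} [AddCommMonoid M] {n : ℕ}
    (F : (Fin (n + 1) → S) → M) :
    ∑ f, F f = ∑ σ : Fin n → S, ∑ x : S, F (Fin.snoc σ x) := by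
  rw [← (Fin.snocEquiv fun _ => S).sum_comp, Fintype.sum_prod_type, sum_comm]
  rfl

theorem sum_traj_snoc [Fintype S] [Fintype A] {M : Type*} [AddCommMonoid M] {n : ℕ}
    (F : (Fin (n + 1) → S) × (Fin (n + 1) → A) → M) :
    ∑ τ, F τ = ∑ τ : (Fin n → S) × (Fin n → A), ∑ x : S, ∑ a : A,
      F (Fin.snoc τ.1 x, Fin.snoc τ.2 a) := by
  simp only [Fintype.sum_prod_type, Fin.sum_univ_pi_snoc (n := n)]
  exact sum_congr rfl fun σ _ => sum_comm

noncomputable def trajWeight (n : ℕ) (d0 : S → ℝ) (T : S → A → S → ℝ)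
    (ρ : Fin (n + 1) → S → A → ℝ) (τ : (Fin (n + 1) → S) × (Fin (n + 1) → A)) : ℝ :=
  d0 (τ.1 0) * (∏ i, ρ i (τ.1 i) (τ.2 i)) *
    ∏ i : Fin n, T (τ.1 i.castSucc) (τ.2 i.castSucc) (τ.1 i.succ)

theorem trajP_eq_trajWeight [Fintype S] [Fintype A] (H : ℕ) (d0 : S → ℝ)
    (T : S → A → S → ℝ) (π : S → A → ℝ) :
    trajP H d0 T π = trajWeight H d0 T fun _ => π :=
  rfl

theorem trajWeight_snoc (n : ℕ) (d0 : S → ℝ) (T : S → A → S → ℝ)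
    (ρ : Fin (n + 2) → S → A → ℝ) (τ : (Fin (n + 1) → S) × (Fin (n + 1) → A)) (x : S) (a : A) :
    trajWeight (n + 1) d0 T ρ (Fin.snoc τ.1 x, Fin.snoc τ.2 a) =
      trajWeight n d0 T (fun i => ρ i.castSucc) τ *
        (T (τ.1 (Fin.last n)) (τ.2 (Fin.last n)) x * ρ (Fin.last (n + 1)) x a) := by
  have h0 : (Fin.snoc τ.1 x : Fin (n + 2) → S) 0 = τ.1 0 :=
    Fin.snoc_castSucc (α := fun _ => S) (i := 0) ..
  simp only [trajWeight, Fin.prod_univ_castSucc, Fin.snoc_castSucc, Fin.snoc_last, h0,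
    Fin.succ_last, Fin.succ_castSucc]
  ring

theorem sum_trajWeight_snoc_mul [Fintype S] [Fintype A] {n : ℕ} {d0 : S → ℝ}
    {T : S → A → S → ℝ} (hT : ∀ s a, ∑ s', T s a s' = 1) (ρ : Fin (n + 2) → S → A → ℝ)
    (hρ : ∀ s, ∑ a, ρ (Fin.last (n + 1)) s a = 1)
    (g : (Fin (n + 1) → S) × (Fin (n + 1) → A) → ℝ) :
    ∑ τ, trajWeight (n + 1) d0 T ρ τ * g (Fin.init τ.1, Fin.init τ.2) =
      ∑ τ, trajWeight n d0 T (fun i => ρ i.castSucc) τ * g τ := by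
  rw [sum_traj_snoc]
  refine sum_congr rfl fun τ _ => ?_
  simp only [trajWeight_snoc, Fin.init_snoc, ← mul_assoc, ← sum_mul, ← mul_sum, hρ, mul_one, hT]

theorem sum_trajWeight_mul_eq_of_eqOn_Iic [Fintype S] [Fintype A] {d0 : S → ℝ}
    {T : S → A → S → ℝ} (hT : ∀ s a, ∑ s', T s a s' = 1) (r : S → A → ℝ) :
    ∀ {n : ℕ} {t : Fin (n + 1)} {ρ ρ' : Fin (n + 1) → S → A → ℝ},
      Set.EqOn ρ ρ' (Set.Iic t) → (∀ i, t < i → ∀ s, ∑ a, ρ i s a = 1) →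
      (∀ i, t < i → ∀ s, ∑ a, ρ' i s a = 1) →
      ∑ τ, trajWeight n d0 T ρ τ * r (τ.1 t) (τ.2 t) =
        ∑ τ, trajWeight n d0 T ρ' τ * r (τ.1 t) (τ.2 t)
  | 0, t, ρ, ρ', heq, _, _ => by
    rw [show ρ = ρ' from funext fun i => heq (Subsingleton.elim (α := Fin 1) i t).le]
  | n + 1, t, ρ, ρ', heq, hρ, hρ' => by
    rcases Fin.eq_castSucc_or_eq_last t with ⟨t₀, rfl⟩ | rfl
    · have peel := fun ρ hρ => sum_trajWeight_snoc_mul (d0 := d0) hT ρ hρ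
        fun τ => r (τ.1 t₀) (τ.2 t₀)
      simp only [Fin.init] at peel
      rw [peel ρ (hρ _ (Fin.castSucc_lt_last t₀)), peel ρ' (hρ' _ (Fin.castSucc_lt_last t₀))]
      exact sum_trajWeight_mul_eq_of_eqOn_Iic hT r
        (fun _ hi => heq (Fin.castSucc_le_castSucc_iff.mpr hi))
        (fun _ hi => hρ _ (Fin.castSucc_lt_castSucc_iff.mpr hi))
        (fun _ hi => hρ' _ (Fin.castSucc_lt_castSucc_iff.mpr hi))
    · rw [show ρ = ρ' from funext fun i => heq (Fin.le_last i)]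

theorem trajP_mul_prod_ratio [Fintype S] [Fintype A] (H : ℕ) (d0 : S → ℝ)
    (T : S → A → S → ℝ) {π πβ : S → A → ℝ} (hπ0 : ∀ s a, 0 ≤ π s a)
    (hsupp : ∀ s a, 0 < π s a → 0 < πβ s a) (t : Fin (H + 1))
    (τ : (Fin (H + 1) → S) × (Fin (H + 1) → A)) :
    trajP H d0 T πβ τ *
        ∏ t' ∈ univ.filter fun t' : Fin (H + 1) => t' ≤ t,
          π (τ.1 t') (τ.2 t') / πβ (τ.1 t') (τ.2 t') =
      trajWeight H d0 T (fun i => if i ≤ t then π else πβ) τ := by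
  have hcancel : ∀ s a, πβ s a * (π s a / πβ s a) = π s a := fun s a =>
    mul_div_cancel_of_imp' fun h => le_antisymm (not_lt.1 fun hπ => (hsupp s a hπ).ne' h) (hπ0 s a)
  rw [trajP, trajWeight, ← prod_filter_mul_prod_filter_not univ (· ≤ t)]
  simp only [ite_apply, prod_ite]
  rw [← prod_congr rfl fun t' _ => hcancel (τ.1 t') (τ.2 t'), prod_mul_distrib]
  ring

end

theorem per_decision_importance_sampling_unbiased_general
    {S A : Type} [Fintype S] [Fintype A]
    (H : ℕ) (d0 : S → ℝ) (T : S → A → S → ℝ)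
    (π πβ : S → A → ℝ) (r : S → A → ℝ) (γ : ℝ)
    (hT1 : ∀ s a, ∑ s', T s a s' = 1)
    (hπ0 : ∀ s a, 0 ≤ π s a) (hπ1 : ∀ s, ∑ a, π s a = 1)
    (hβ1 : ∀ s, ∑ a, πβ s a = 1)
    (hsupp : ∀ s a, 0 < π s a → 0 < πβ s a) :
    ∑ τ : (Fin (H + 1) → S) × (Fin (H + 1) → A),
        trajP H d0 T πβ τ *
          ∑ t : Fin (H + 1), γ ^ (t : ℕ) *
            (∏ t' ∈ univ.filter fun t' : Fin (H + 1) => t' ≤ t,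
              π (τ.1 t') (τ.2 t') / πβ (τ.1 t') (τ.2 t')) *
            r (τ.1 t) (τ.2 t) =
      Jret H d0 T π r γ := by
  have hstep : ∀ t : Fin (H + 1),
      ∑ τ, trajP H d0 T πβ τ * (∏ t' ∈ univ.filter fun t' : Fin (H + 1) => t' ≤ t,
          π (τ.1 t') (τ.2 t') / πβ (τ.1 t') (τ.2 t')) * r (τ.1 t) (τ.2 t) =
        ∑ τ, trajP H d0 T π τ * r (τ.1 t) (τ.2 t) := fun t => by
    simp only [trajP_mul_prod_ratio H d0 T hπ0 hsupp]
    rw [trajP_eq_trajWeight]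
    refine sum_trajWeight_mul_eq_of_eqOn_Iic hT1 r (fun _ hi => if_pos hi)
      (fun i hi s => ?_) fun _ _ => hπ1
    simpa only [if_neg hi.not_ge] using hβ1 s
  calc _ = ∑ t : Fin (H + 1), γ ^ (t : ℕ) * ∑ τ, trajP H d0 T πβ τ *
        (∏ t' ∈ univ.filter fun t' : Fin (H + 1) => t' ≤ t,
          π (τ.1 t') (τ.2 t') / πβ (τ.1 t') (τ.2 t')) * r (τ.1 t) (τ.2 t) := by
        simp only [mul_sum]
        rw [sum_comm]
        exact sum_congr rfl fun _ _ => sum_congr rfl fun _ _ => by ring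
    _ = Jret H d0 T π r γ := by
        simp only [hstep, Jret, mul_sum]
        rw [sum_comm]
        exact sum_congr rfl fun _ _ => sum_congr rfl fun _ _ => by ring

/-- **Unbiasedness of the per-decision importance sampling estimator.**
Importance weights for time steps after `t` may be dropped from the weight multiplying
the reward at time `t` without introducing bias:
`E_{τ ∼ p_{π_β}}[Σ_{t=0}^H γ^t (∏_{t'=0}^t π(a_{t'}|s_{t'})/π_β(a_{t'}|s_{t'})) r(s_t,a_t)] = J(π)`. -/
theorem per_decision_importance_sampling_unbiased
    {S A : Type} [Fintype S] [Fintype A]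
    (H : ℕ) (d0 : S → ℝ) (T : S → A → S → ℝ)
    (π πβ : S → A → ℝ) (r : S → A → ℝ) (γ : ℝ) (hγ0 : 0 < γ) (hγ1 : γ < 1)
    (hd00 : ∀ s, 0 ≤ d0 s) (hd01 : ∑ s, d0 s = 1)
    (hT0 : ∀ s a s', 0 ≤ T s a s') (hT1 : ∀ s a, ∑ s', T s a s' = 1)
    (hπ0 : ∀ s a, 0 ≤ π s a) (hπ1 : ∀ s, ∑ a, π s a = 1)
    (hβ0 : ∀ s a, 0 ≤ πβ s a) (hβ1 : ∀ s, ∑ a, πβ s a = 1)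
    (hsupp : ∀ s a, 0 < π s a → 0 < πβ s a) :
    ∑ τ : (Fin (H + 1) → S) × (Fin (H + 1) → A),
        trajP H d0 T πβ τ *
          ∑ t : Fin (H + 1), γ ^ (t : ℕ) *
            (∏ t' ∈ univ.filter fun t' : Fin (H + 1) => t' ≤ t,
              π (τ.1 t') (τ.2 t') / πβ (τ.1 t') (τ.2 t')) *
            r (τ.1 t) (τ.2 t) =
      Jret H d0 T π r γ :=
  per_decision_importance_sampling_unbiased_general H d0 T π πβ r γ hT1 hπ0 hπ1 hβ1 hsupp
end

section
/- Let M be a finite MDP, let H ≥ 0 be a finite horizon, let π and π_β be policies with π_β(a|s) > 0 whenever π(a|s) > 0, and define the cumulative importance weights w_t = ∏_{t'=0}^{t} π(a_{t'}|s_{t'})/π_β(a_{t'}|s_{t'}) with the convention w_{−1} = 1. Then for EVERY function Q̂ : S × A → ℝ, the doubly robust estimator is unbiased when the true behavior policy is used: E_{τ ∼ p_{π_β}}[ Σ_{t=0}^{H} γ^t ( w_t·(r(s_t,a_t) − Q̂(s_t,a_t)) + w_{t−1}·E_{a ∼ π(·|s_t)}[Q̂(s_t,a)] ) ] = J(π).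 -/
open Finset

/-!
Multiplying the behaviour-policy probability of a trajectory by the cumulative weight `w_t`
(resp. `w_{t-1}`) gives exactly its probability under the time-dependent policy that plays `π`
up to time `t` (resp. `t - 1`) and `π_β` afterwards; this uses that `π_β(a|s) = 0` forces
`π(a|s) = 0`. The law of `(s_t, a_t)` under a time-dependent policy only depends on its
components up to time `t`, the one at time `t` entering only as the action distribution at `s_t`.
So the `w_t Q̂(s_t, a_t)` and `w_{t-1} E_{a∼π}[Q̂(s_t, a)]` terms have equal expectations and
cancel, while `w_t r(s_t, a_t)` has the expectation of `r(s_t, a_t)` under `π`.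
-/

theorem Fin.sum_univ_fun_snoc {X M : Type*} [Fintype X] [AddCommMonoid M] {n : ℕ}
    (g : (Fin (n + 1) → X) → M) :
    ∑ f, g f = ∑ p : Fin n → X, ∑ x : X, g (Fin.snoc p x) := by
  rw [← (Fin.snocEquiv fun _ => X).sum_comp g, Fintype.sum_prod_type, sum_comm]
  rfl

section TimeDependentPolicy

variable {S A : Type}

noncomputable def trajProb (H : ℕ) (d0 : S → ℝ) (T : S → A → S → ℝ)
    (σ : Fin (H + 1) → S → A → ℝ) (τ : (Fin (H + 1) → S) × (Fin (H + 1) → A)) : ℝ :=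
  d0 (τ.1 0) * (∏ t, σ t (τ.1 t) (τ.2 t)) *
    ∏ t : Fin H, T (τ.1 t.castSucc) (τ.2 t.castSucc) (τ.1 t.succ)

noncomputable def trajExp [Fintype S] [Fintype A] (H : ℕ) (d0 : S → ℝ) (T : S → A → S → ℝ)
    (σ : Fin (H + 1) → S → A → ℝ) (F : (Fin (H + 1) → S) × (Fin (H + 1) → A) → ℝ) : ℝ :=
  ∑ τ, trajProb H d0 T σ τ * F τ

variable {H : ℕ} {d0 : S → ℝ} {T : S → A → S → ℝ}

theorem trajProb_snoc (σ : Fin (H + 2) → S → A → ℝ) (s : Fin (H + 1) → S)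
    (a : Fin (H + 1) → A) (x : S) (y : A) :
    trajProb (H + 1) d0 T σ (Fin.snoc s x, Fin.snoc a y) =
      trajProb H d0 T (fun j => σ j.castSucc) (s, a) *
        (T (s (Fin.last H)) (a (Fin.last H)) x * σ (Fin.last (H + 1)) x y) := by
  unfold trajProb
  simp only [Fin.prod_univ_castSucc, Fin.succ_castSucc, Fin.snoc_castSucc, Fin.snoc_last,
    Fin.succ_last]
  rw [show (0 : Fin (H + 2)) = (0 : Fin (H + 1)).castSucc from rfl, Fin.snoc_castSucc]
  ring

theorem trajProb_snoc_action (σ : Fin (H + 1) → S → A → ℝ) (s : Fin (H + 1) → S)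
    (q : Fin H → A) (y : A) :
    trajProb H d0 T σ (s, Fin.snoc q y) =
      d0 (s 0) * (∏ t : Fin H, σ t.castSucc (s t.castSucc) (q t)) *
          (∏ t : Fin H, T (s t.castSucc) (q t) (s t.succ)) *
        σ (Fin.last H) (s (Fin.last H)) y := by
  simp only [trajProb, Fin.prod_univ_castSucc, Fin.snoc_castSucc, Fin.snoc_last]
  ring

variable [Fintype S] [Fintype A]

theorem trajExp_succ_of_snoc (hT1 : ∀ s a, ∑ s', T s a s' = 1)
    {σ : Fin (H + 2) → S → A → ℝ} (hσ : ∀ s, ∑ a, σ (Fin.last (H + 1)) s a = 1)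
    {F : (Fin (H + 2) → S) × (Fin (H + 2) → A) → ℝ}
    {F' : (Fin (H + 1) → S) × (Fin (H + 1) → A) → ℝ}
    (hF : ∀ s a x y, F (Fin.snoc s x, Fin.snoc a y) = F' (s, a)) :
    trajExp (H + 1) d0 T σ F = trajExp H d0 T (fun j => σ j.castSucc) F' := by
  unfold trajExp
  simp only [Fintype.sum_prod_type]
  rw [Fin.sum_univ_fun_snoc]
  refine sum_congr rfl fun s _ => ?_
  simp only [Fin.sum_univ_fun_snoc (fun a => trajProb _ _ _ _ (Fin.snoc s _, a) * _),
    trajProb_snoc, hF]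
  rw [sum_comm]
  refine sum_congr rfl fun a _ => ?_
  calc ∑ x, ∑ y, trajProb H d0 T (fun j => σ j.castSucc) (s, a) *
          (T (s (Fin.last H)) (a (Fin.last H)) x * σ (Fin.last (H + 1)) x y) * F' (s, a)
      = trajProb H d0 T (fun j => σ j.castSucc) (s, a) * F' (s, a) *
          ∑ x, T (s (Fin.last H)) (a (Fin.last H)) x * ∑ y, σ (Fin.last (H + 1)) x y := by
        simp only [mul_sum]
        exact sum_congr rfl fun _ _ => sum_congr rfl fun _ _ => by ring
    _ = _ := by simp only [hσ, mul_one, hT1]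

theorem trajExp_eval_last {σ σ' : Fin (H + 1) → S → A → ℝ}
    (hagree : ∀ j < Fin.last H, σ j = σ' j) (hσ' : ∀ s, ∑ a, σ' (Fin.last H) s a = 1)
    (f : S → A → ℝ) :
    trajExp H d0 T σ (fun τ => f (τ.1 (Fin.last H)) (τ.2 (Fin.last H))) =
      trajExp H d0 T σ' fun τ =>
        ∑ a, σ (Fin.last H) (τ.1 (Fin.last H)) a * f (τ.1 (Fin.last H)) a := by
  unfold trajExp
  simp only [Fintype.sum_prod_type]
  refine sum_congr rfl fun s _ => ?_
  simp only [Fin.sum_univ_fun_snoc (fun a => trajProb _ _ _ _ (s, a) * _), trajProb_snoc_action,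
    Fin.snoc_last]
  refine sum_congr rfl fun q _ => ?_
  have hprefix : ∀ t : Fin H, σ t.castSucc = σ' t.castSucc :=
    fun t => hagree _ (Fin.castSucc_lt_last t)
  simp only [hprefix, ← sum_mul, hσ', one_mul, mul_assoc, ← mul_sum]

theorem trajExp_eval_eq_of_eqOn_lt (hT1 : ∀ s a, ∑ s', T s a s' = 1) (t : Fin (H + 1))
    {σ σ' : Fin (H + 1) → S → A → ℝ} (hσ : ∀ j s, ∑ a, σ j s a = 1)
    (hσ' : ∀ j s, ∑ a, σ' j s a = 1) (hagree : ∀ j < t, σ j = σ' j) (f : S → A → ℝ) :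
    trajExp H d0 T σ (fun τ => f (τ.1 t) (τ.2 t)) =
      trajExp H d0 T σ' fun τ => ∑ a, σ t (τ.1 t) a * f (τ.1 t) a := by
  induction H with
  | zero =>
    obtain rfl : t = Fin.last 0 := Subsingleton.elim (α := Fin 1) _ _
    exact trajExp_eval_last hagree (hσ' _) f
  | succ H ih =>
    induction t using Fin.lastCases with
    | last => exact trajExp_eval_last hagree (hσ' _) f
    | cast t =>
      rw [trajExp_succ_of_snoc hT1 (hσ _) (F' := fun τ => f (τ.1 t) (τ.2 t))
          (fun _ _ _ _ => by simp only [Fin.snoc_castSucc]),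
        trajExp_succ_of_snoc hT1 (hσ' _)
          (F' := fun τ => ∑ a, σ t.castSucc (τ.1 t) a * f (τ.1 t) a)
          (fun _ _ _ _ => by simp only [Fin.snoc_castSucc])]
      exact ih t (fun _ => hσ _) (fun _ => hσ' _)
        (fun j hj => hagree _ (Fin.castSucc_lt_castSucc_iff.mpr hj))

theorem trajExp_eval_eq_of_eqOn_le (hT1 : ∀ s a, ∑ s', T s a s' = 1) (t : Fin (H + 1))
    {σ σ' : Fin (H + 1) → S → A → ℝ} (hσ : ∀ j s, ∑ a, σ j s a = 1)
    (hσ' : ∀ j s, ∑ a, σ' j s a = 1) (hagree : ∀ j ≤ t, σ j = σ' j) (f : S → A → ℝ) :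
    trajExp H d0 T σ (fun τ => f (τ.1 t) (τ.2 t)) =
      trajExp H d0 T σ' fun τ => f (τ.1 t) (τ.2 t) := by
  rw [trajExp_eval_eq_of_eqOn_lt hT1 t hσ hσ' (fun j hj => hagree j hj.le) f, hagree t le_rfl,
    trajExp_eval_eq_of_eqOn_lt hT1 t hσ' hσ' (fun _ _ => rfl) f]

theorem trajP_mul_prod_div_eq_trajProb {π πβ : S → A → ℝ}
    (habs : ∀ s a, πβ s a = 0 → π s a = 0) (p : Fin (H + 1) → Prop) [DecidablePred p]
    (τ : (Fin (H + 1) → S) × (Fin (H + 1) → A)) :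
    trajP H d0 T πβ τ * ∏ t ∈ univ.filter p, π (τ.1 t) (τ.2 t) / πβ (τ.1 t) (τ.2 t) =
      trajProb H d0 T (fun j => if p j then π else πβ) τ := by
  have hweights : (∏ t, πβ (τ.1 t) (τ.2 t)) *
      ∏ t ∈ univ.filter p, π (τ.1 t) (τ.2 t) / πβ (τ.1 t) (τ.2 t) =
        ∏ t, (if p t then π else πβ) (τ.1 t) (τ.2 t) := by
    rw [prod_filter, ← prod_mul_distrib]
    refine prod_congr rfl fun t _ => ?_
    split_ifs
    · exact mul_div_cancel_of_imp' (habs _ _)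
    · exact mul_one _
  rw [trajProb, ← hweights, trajP]
  ring

theorem trajExp_doublyRobust_term (hT1 : ∀ s a, ∑ s', T s a s' = 1) {π πβ : S → A → ℝ}
    (hπ1 : ∀ s, ∑ a, π s a = 1) (hβ1 : ∀ s, ∑ a, πβ s a = 1) (t : Fin (H + 1))
    (r Q : S → A → ℝ) :
    trajExp H d0 T (fun j => if j ≤ t then π else πβ)
        (fun τ => r (τ.1 t) (τ.2 t) - Q (τ.1 t) (τ.2 t)) +
      trajExp H d0 T (fun j => if j < t then π else πβ)
        (fun τ => ∑ a, π (τ.1 t) a * Q (τ.1 t) a) =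
      trajExp H d0 T (fun _ => π) fun τ => r (τ.1 t) (τ.2 t) := by
  have hswitch : ∀ (p : Fin (H + 1) → Prop) [DecidablePred p] j s,
      ∑ a, (if p j then π else πβ) s a = 1 := by
    intro p _ j s
    split_ifs
    exacts [hπ1 s, hβ1 s]
  have hreward := trajExp_eval_eq_of_eqOn_le (d0 := d0) hT1 t (hswitch _) (fun _ => hπ1)
    (fun j hj => if_pos hj) r
  have hcontrol := trajExp_eval_eq_of_eqOn_lt (d0 := d0) hT1 t (hswitch (· ≤ t))
    (hswitch (· < t)) (fun j hj => by simp only [if_pos hj.le, if_pos hj]) Q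
  simp only [le_refl, if_true] at hcontrol
  rw [← hreward, ← hcontrol, trajExp, trajExp, trajExp, ← sum_add_distrib]
  exact sum_congr rfl fun τ _ => by ring

end TimeDependentPolicy

theorem doubly_robust_unbiased_general
    {S A : Type} [Fintype S] [Fintype A]
    (H : ℕ) (d0 : S → ℝ) (T : S → A → S → ℝ)
    (π πβ : S → A → ℝ) (r : S → A → ℝ) (γ : ℝ)
    (Qhat : S → A → ℝ)
    (hT1 : ∀ s a, ∑ s', T s a s' = 1)
    (hπ0 : ∀ s a, 0 ≤ π s a) (hπ1 : ∀ s, ∑ a, π s a = 1)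
    (hβ1 : ∀ s, ∑ a, πβ s a = 1)
    (hsupp : ∀ s a, 0 < π s a → 0 < πβ s a) :
    ∑ τ : (Fin (H + 1) → S) × (Fin (H + 1) → A),
        trajP H d0 T πβ τ *
          ∑ t : Fin (H + 1), γ ^ (t : ℕ) *
            ((∏ t' ∈ univ.filter fun t' : Fin (H + 1) => t' ≤ t,
                π (τ.1 t') (τ.2 t') / πβ (τ.1 t') (τ.2 t')) *
                (r (τ.1 t) (τ.2 t) - Qhat (τ.1 t) (τ.2 t)) +
              (∏ t' ∈ univ.filter fun t' : Fin (H + 1) => t' < t,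
                π (τ.1 t') (τ.2 t') / πβ (τ.1 t') (τ.2 t')) *
                ∑ a : A, π (τ.1 t) a * Qhat (τ.1 t) a) =
      Jret H d0 T π r γ := by
  have habs : ∀ s a, πβ s a = 0 → π s a = 0 := fun s a hβ =>
    (hπ0 s a).eq_or_lt.elim Eq.symm fun hπ => absurd hβ (hsupp s a hπ).ne'
  calc _ = ∑ t : Fin (H + 1), γ ^ (t : ℕ) *
          (trajExp H d0 T (fun j => if j ≤ t then π else πβ)
              (fun τ => r (τ.1 t) (τ.2 t) - Qhat (τ.1 t) (τ.2 t)) +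
            trajExp H d0 T (fun j => if j < t then π else πβ)
              (fun τ => ∑ a, π (τ.1 t) a * Qhat (τ.1 t) a)) := by
        rw [sum_congr rfl fun τ _ => mul_sum _ _ _, sum_comm]
        refine sum_congr rfl fun t _ => ?_
        rw [trajExp, trajExp, ← sum_add_distrib, mul_sum]
        refine sum_congr rfl fun τ _ => ?_
        rw [← trajP_mul_prod_div_eq_trajProb habs, ← trajP_mul_prod_div_eq_trajProb habs]
        ring
    _ = ∑ t : Fin (H + 1), γ ^ (t : ℕ) *
          trajExp H d0 T (fun _ => π) (fun τ => r (τ.1 t) (τ.2 t)) := by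
        simp only [trajExp_doublyRobust_term hT1 hπ1 hβ1]
    _ = Jret H d0 T π r γ := by
        simp only [Jret, trajExp, mul_sum]
        rw [sum_comm]
        exact sum_congr rfl fun t _ => sum_congr rfl fun τ _ => by rw [trajProb, trajP]; ring

/-- **Unbiasedness of the doubly robust estimator (true behavior policy case).**
With cumulative importance weights `w_t = ∏_{t'=0}^t π(a_{t'}|s_{t'})/π_β(a_{t'}|s_{t'})`
(and `w_{-1} = 1`), for every function `Q̂ : S × A → ℝ`,
`E_{τ ∼ p_{π_β}}[Σ_t γ^t (w_t (r(s_t,a_t) − Q̂(s_t,a_t)) + w_{t−1} E_{a∼π(·|s_t)}[Q̂(s_t,a)])] = J(π)`. -/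
theorem doubly_robust_unbiased
    {S A : Type} [Fintype S] [Fintype A]
    (H : ℕ) (d0 : S → ℝ) (T : S → A → S → ℝ)
    (π πβ : S → A → ℝ) (r : S → A → ℝ) (γ : ℝ) (hγ0 : 0 < γ) (hγ1 : γ < 1)
    (Qhat : S → A → ℝ)
    (hd00 : ∀ s, 0 ≤ d0 s) (hd01 : ∑ s, d0 s = 1)
    (hT0 : ∀ s a s', 0 ≤ T s a s') (hT1 : ∀ s a, ∑ s', T s a s' = 1)
    (hπ0 : ∀ s a, 0 ≤ π s a) (hπ1 : ∀ s, ∑ a, π s a = 1)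
    (hβ0 : ∀ s a, 0 ≤ πβ s a) (hβ1 : ∀ s, ∑ a, πβ s a = 1)
    (hsupp : ∀ s a, 0 < π s a → 0 < πβ s a) :
    ∑ τ : (Fin (H + 1) → S) × (Fin (H + 1) → A),
        trajP H d0 T πβ τ *
          ∑ t : Fin (H + 1), γ ^ (t : ℕ) *
            ((∏ t' ∈ univ.filter fun t' : Fin (H + 1) => t' ≤ t,
                π (τ.1 t') (τ.2 t') / πβ (τ.1 t') (τ.2 t')) *
                (r (τ.1 t) (τ.2 t) - Qhat (τ.1 t) (τ.2 t)) +
              (∏ t' ∈ univ.filter fun t' : Fin (H + 1) => t' < t,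
                π (τ.1 t') (τ.2 t') / πβ (τ.1 t') (τ.2 t')) *
                ∑ a : A, π (τ.1 t) a * Qhat (τ.1 t) a) =
      Jret H d0 T π r γ :=
  doubly_robust_unbiased_general H d0 T π πβ r γ Qhat hT1 hπ0 hπ1 hβ1 hsupp
end

section
/- Let M be a finite MDP with discount γ ∈ (0,1), and let π and π_β be policies such that d^{π_β}(s) > 0 and π_β(a|s) > 0 for all s ∈ S, a ∈ A. For ρ : S → ℝ and f : S → ℝ define L(ρ, f) = γ·E_{s ∼ d^{π_β}, a ∼ π_β(·|s), s' ∼ T(·|s,a)}[ (ρ(s)·π(a|s)/π_β(a|s) − ρ(s'))·f(s') ] + (1−γ)·E_{s₀ ∼ d₀}[ (1 − ρ(s₀))·f(s₀) ]. Then L(ρ, f) = 0 for all functions f : S → ℝ if and only if ρ(s) = ρ^π(s) = d^π(s)/d^{π_β}(s) for all s ∈ S. -/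
/-!
Write `P_π s s' = Σ_a π(a|s) T(s'|s,a)`. Using the flow equation
`d^{π_β} = (1 - γ) d₀ + γ d^{π_β} P_{π_β}`, the importance weight `π/π_β` turns `L(ρ, f)` into the
pairing of `f` with the residual `(1 - γ) d₀ + γ (ρ d^{π_β}) P_π - ρ d^{π_β}` of the flow equation
of `π`. Hence `L(ρ, ·) ≡ 0` iff `ρ d^{π_β}` solves that equation. Its only solution is `d^π`: a
row-stochastic matrix does not increase the `ℓ¹` norm, so `x ↦ c + γ x P_π` is an `ℓ¹` contraction
for `γ < 1`. The same `ℓ¹` bound makes the series defining `d^π` converge.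
-/

open Finset

/-- Time-indexed state marginal `d_t^π(s) = P_{p_π}(s_t = s)` of the Markov chain
induced by policy `π` in a finite MDP with initial distribution `d0` and transition
kernel `T`. -/
noncomputable def stateDist {S A : Type} [Fintype S] [Fintype A]
    (d0 : S → ℝ) (T : S → A → S → ℝ) (π : S → A → ℝ) : ℕ → S → ℝ
  | 0, s => d0 s
  | t + 1, s' => ∑ s, ∑ a, stateDist d0 T π t s * π s a * T s a s'

/-- Normalized discounted state occupancy `d^π(s) = (1−γ) Σ_{t=0}^∞ γ^t P_{p_π}(s_t = s)`. -/
noncomputable def occ {S A : Type} [Fintype S] [Fintype A]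
    (d0 : S → ℝ) (T : S → A → S → ℝ) (π : S → A → ℝ) (γ : ℝ) (s : S) : ℝ :=
  (1 - γ) * ∑' t : ℕ, γ ^ t * stateDist d0 T π t s

open Matrix

section RowStochastic

variable {n : Type*} [Fintype n] [DecidableEq n] {M : Matrix n n ℝ}

lemma sum_abs_vecMul_le_of_mem_rowStochastic (hM : M ∈ rowStochastic ℝ n) (x : n → ℝ) :
    ∑ j, |(x ᵥ* M) j| ≤ ∑ i, |x i| :=
  calc ∑ j, |(x ᵥ* M) j| ≤ ∑ j, ∑ i, |x i| * M i j :=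
        sum_le_sum fun j _ => (abs_sum_le_sum_abs _ _).trans_eq <|
          sum_congr rfl fun i _ => by rw [abs_mul, abs_of_nonneg (hM.1 i j)]
    _ = ∑ i, |x i| := by
        rw [sum_comm]
        simp only [← mul_sum, sum_row_of_mem_rowStochastic hM, mul_one]

lemma eq_zero_of_eq_smul_vecMul_of_mem_rowStochastic (hM : M ∈ rowStochastic ℝ n) {γ : ℝ}
    (hγ0 : 0 ≤ γ) (hγ1 : γ < 1) {x : n → ℝ} (hx : x = γ • (x ᵥ* M)) : x = 0 := by
  have hnonneg : 0 ≤ ∑ i, |x i| := sum_nonneg fun i _ => abs_nonneg (x i)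
  have hcontract : ∑ i, |x i| ≤ γ * ∑ i, |x i| :=
    calc ∑ i, |x i| = γ * ∑ j, |(x ᵥ* M) j| := by
          conv_lhs => rw [hx]
          simp only [Pi.smul_apply, smul_eq_mul, abs_mul, abs_of_nonneg hγ0, mul_sum]
      _ ≤ γ * ∑ i, |x i| :=
          mul_le_mul_of_nonneg_left (sum_abs_vecMul_le_of_mem_rowStochastic hM x) hγ0
  have hzero : ∑ i, |x i| = 0 := by nlinarith
  funext i
  exact abs_eq_zero.mp <|
    (sum_eq_zero_iff_of_nonneg fun j _ => abs_nonneg (x j)).mp hzero i (mem_univ i)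

lemma eq_of_eq_add_smul_vecMul_of_mem_rowStochastic (hM : M ∈ rowStochastic ℝ n) {γ : ℝ}
    (hγ0 : 0 ≤ γ) (hγ1 : γ < 1) {c x y : n → ℝ} (hx : x = c + γ • (x ᵥ* M))
    (hy : y = c + γ • (y ᵥ* M)) : x = y := by
  refine sub_eq_zero.mp (eq_zero_of_eq_smul_vecMul_of_mem_rowStochastic hM hγ0 hγ1 ?_)
  conv_lhs => rw [hx, hy]
  rw [sub_vecMul, smul_sub, add_sub_add_left_eq_sub]

end RowStochastic

section MDP

variable {S A : Type} [Fintype S] [Fintype A]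

def transitionMatrix (T : S → A → S → ℝ) (p : S → A → ℝ) : Matrix S S ℝ :=
  fun s s' => ∑ a, p s a * T s a s'

lemma vecMul_transitionMatrix_apply (T : S → A → S → ℝ) (p : S → A → ℝ) (g : S → ℝ) (s' : S) :
    (g ᵥ* transitionMatrix T p) s' = ∑ s, ∑ a, g s * p s a * T s a s' := by
  simp only [vecMul, dotProduct, transitionMatrix, mul_sum, mul_assoc]

lemma transitionMatrix_mem_rowStochastic [DecidableEq S] {T : S → A → S → ℝ} {p : S → A → ℝ}
    (hT0 : ∀ s a s', 0 ≤ T s a s') (hT1 : ∀ s a, ∑ s', T s a s' = 1)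
    (hp0 : ∀ s a, 0 ≤ p s a) (hp1 : ∀ s, ∑ a, p s a = 1) :
    transitionMatrix T p ∈ rowStochastic ℝ S := by
  refine mem_rowStochastic_iff_sum.mpr
    ⟨fun s s' => sum_nonneg fun a _ => mul_nonneg (hp0 s a) (hT0 s a s'), fun s => ?_⟩
  simp only [transitionMatrix]
  rw [sum_comm]
  simp only [← mul_sum, hT1, mul_one, hp1]

lemma stateDist_succ (d0 : S → ℝ) (T : S → A → S → ℝ) (p : S → A → ℝ) (t : ℕ) :
    stateDist d0 T p (t + 1) = stateDist d0 T p t ᵥ* transitionMatrix T p := by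
  funext s'
  rw [vecMul_transitionMatrix_apply, stateDist]

/-- `L(ρ, f)`, with the behaviour occupancy `d^{π_β}` abstracted to an arbitrary `d`. -/
noncomputable def adversarialObjective (d0 : S → ℝ) (T : S → A → S → ℝ) (π πβ : S → A → ℝ) (γ : ℝ)
    (d ρ f : S → ℝ) : ℝ :=
  γ * (∑ s, ∑ a, ∑ s', d s * πβ s a * T s a s' * ((ρ s * (π s a / πβ s a) - ρ s') * f s')) +
    (1 - γ) * (∑ s0, d0 s0 * ((1 - ρ s0) * f s0))

variable {d0 : S → ℝ} {T : S → A → S → ℝ} {γ : ℝ}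

lemma adversarialObjective_eq_dotProduct {π πβ : S → A → ℝ} {d : S → ℝ}
    (hπβ : ∀ s a, πβ s a ≠ 0) (hd : d = (1 - γ) • d0 + γ • (d ᵥ* transitionMatrix T πβ))
    (ρ f : S → ℝ) :
    adversarialObjective d0 T π πβ γ d ρ f =
      ((1 - γ) • d0 + γ • ((ρ * d) ᵥ* transitionMatrix T π) - ρ * d) ⬝ᵥ f := by
  have hinner : ∀ s', ∑ s, ∑ a, d s * πβ s a * T s a s' * ((ρ s * (π s a / πβ s a) - ρ s') * f s')
      = (((ρ * d) ᵥ* transitionMatrix T π) s' - ρ s' * (d ᵥ* transitionMatrix T πβ) s') * f s' := by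
    intro s'
    simp only [vecMul_transitionMatrix_apply, mul_sum, sum_mul, ← sum_sub_distrib]
    refine sum_congr rfl fun s _ => sum_congr rfl fun a _ => ?_
    field_simp [hπβ s a]
    simp only [Pi.mul_apply]
    ring
  -- The flow equation of `d` rewrites `γ ρ s' (d P_{π_β}) s'` as `ρ s' (d s' - (1 - γ) d0 s')`.
  have hflow := congrFun hd
  simp only [Pi.add_apply, Pi.smul_apply, smul_eq_mul] at hflow
  rw [adversarialObjective, sum_congr rfl fun s _ => sum_comm, sum_comm]
  simp only [hinner, dotProduct, mul_sum, ← sum_add_distrib]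
  refine sum_congr rfl fun s' _ => ?_
  simp only [Pi.sub_apply, Pi.add_apply, Pi.smul_apply, Pi.mul_apply, smul_eq_mul]
  linear_combination (ρ s' * f s') * hflow s'

variable [DecidableEq S] {p : S → A → ℝ}

lemma sum_abs_stateDist_le (hP : transitionMatrix T p ∈ rowStochastic ℝ S) (t : ℕ) :
    ∑ s, |stateDist d0 T p t s| ≤ ∑ s, |d0 s| := by
  induction t with
  | zero => rfl
  | succ t ih =>
    rw [stateDist_succ]
    exact (sum_abs_vecMul_le_of_mem_rowStochastic hP _).trans ih

lemma summable_discounted_stateDist (hP : transitionMatrix T p ∈ rowStochastic ℝ S)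
    (hγ0 : 0 ≤ γ) (hγ1 : γ < 1) : Summable fun t => γ ^ t • stateDist d0 T p t := by
  refine Pi.summable.mpr fun s => ?_
  refine .of_norm_bounded ((summable_geometric_of_lt_one hγ0 hγ1).mul_right (∑ s, |d0 s|))
    fun t => ?_
  have hle : |stateDist d0 T p t s| ≤ ∑ s, |d0 s| :=
    (single_le_sum (fun s _ => abs_nonneg (stateDist d0 T p t s)) (mem_univ s)).trans
      (sum_abs_stateDist_le hP t)
  simpa only [Pi.smul_apply, smul_eq_mul, Real.norm_eq_abs, abs_mul, abs_pow,
    abs_of_nonneg hγ0] using mul_le_mul_of_nonneg_left hle (pow_nonneg hγ0 t)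

variable (d0) in
lemma occ_eq_add_smul_vecMul (hP : transitionMatrix T p ∈ rowStochastic ℝ S)
    (hγ0 : 0 ≤ γ) (hγ1 : γ < 1) :
    occ d0 T p γ = (1 - γ) • d0 + γ • (occ d0 T p γ ᵥ* transitionMatrix T p) := by
  set u : ℕ → S → ℝ := fun t => γ ^ t • stateDist d0 T p t
  have hu : HasSum u (∑' t, u t) := (summable_discounted_stateDist hP hγ0 hγ1).hasSum
  have hocc : occ d0 T p γ = (1 - γ) • ∑' t, u t := by
    funext s
    simp only [occ, Pi.smul_apply, smul_eq_mul, u,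
      tsum_apply (summable_discounted_stateDist hP hγ0 hγ1)]
  have hshift : HasSum (fun t => u (t + 1)) (γ • ((∑' t, u t) ᵥ* transitionMatrix T p)) := by
    have hsucc : ∀ t, u (t + 1) = γ • (u t ᵥ* transitionMatrix T p) := fun t => by
      simp only [u, stateDist_succ, smul_vecMul, pow_succ, mul_comm _ γ, mul_smul]
    simpa only [hsucc, Function.comp_def, vecMulLinear_apply] using
      (hu.map (vecMulLinear _) (continuous_id.matrix_vecMul continuous_const)).const_smul γ
  have hstep : ∑' t, u t = d0 + γ • ((∑' t, u t) ᵥ* transitionMatrix T p) := by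
    have htail := (hasSum_nat_add_iff' 1).mpr hu
    simp only [range_one, sum_singleton, u, pow_zero, one_smul, stateDist] at htail
    rw [← sub_eq_iff_eq_add', htail.unique hshift]
  rw [hocc, smul_vecMul, smul_comm γ (1 - γ), ← smul_add, ← hstep]

lemma eq_occ_iff (hP : transitionMatrix T p ∈ rowStochastic ℝ S) (hγ0 : 0 ≤ γ) (hγ1 : γ < 1)
    (g : S → ℝ) :
    g = occ d0 T p γ ↔ g = (1 - γ) • d0 + γ • (g ᵥ* transitionMatrix T p) := by
  have hocc := occ_eq_add_smul_vecMul d0 hP hγ0 hγ1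
  exact ⟨fun h => h ▸ hocc,
    fun h => eq_of_eq_add_smul_vecMul_of_mem_rowStochastic hP hγ0 hγ1 h hocc⟩

end MDP

theorem adversarial_ratio_characterization_general
    {S A : Type} [Fintype S] [Fintype A]
    (d0 : S → ℝ) (T : S → A → S → ℝ) (π πβ : S → A → ℝ) (γ : ℝ)
    (hγ0 : 0 < γ) (hγ1 : γ < 1)
    (hT0 : ∀ s a s', 0 ≤ T s a s') (hT1 : ∀ s a, ∑ s', T s a s' = 1)
    (hπ0 : ∀ s a, 0 ≤ π s a) (hπ1 : ∀ s, ∑ a, π s a = 1)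
    (hβ0 : ∀ s a, 0 < πβ s a) (hβ1 : ∀ s, ∑ a, πβ s a = 1)
    (hoccβ : ∀ s, 0 < occ d0 T πβ γ s)
    (ρ : S → ℝ) :
    (∀ f : S → ℝ,
      γ * (∑ s, ∑ a, ∑ s', occ d0 T πβ γ s * πβ s a * T s a s' *
          ((ρ s * (π s a / πβ s a) - ρ s') * f s')) +
        (1 - γ) * (∑ s0, d0 s0 * ((1 - ρ s0) * f s0)) = 0) ↔
    (∀ s, ρ s = occ d0 T π γ s / occ d0 T πβ γ s) := by
  classical
  have hPπ := transitionMatrix_mem_rowStochastic hT0 hT1 hπ0 hπ1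
  have hPβ := transitionMatrix_mem_rowStochastic hT0 hT1 (fun s a => (hβ0 s a).le) hβ1
  have hL := adversarialObjective_eq_dotProduct (π := π) (fun s a => (hβ0 s a).ne')
    (occ_eq_add_smul_vecMul d0 hPβ hγ0.le hγ1) ρ
  calc (∀ f, adversarialObjective d0 T π πβ γ (occ d0 T πβ γ) ρ f = 0)
      ↔ (1 - γ) • d0 + γ • ((ρ * occ d0 T πβ γ) ᵥ* transitionMatrix T π)
          - ρ * occ d0 T πβ γ = 0 := by simp only [hL, dotProduct_eq_zero_iff]
    _ ↔ ρ * occ d0 T πβ γ = occ d0 T π γ := by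
      rw [sub_eq_zero, eq_comm, eq_occ_iff hPπ hγ0.le hγ1]
    _ ↔ ∀ s, ρ s = occ d0 T π γ s / occ d0 T πβ γ s := by
      simp only [funext_iff, Pi.mul_apply, eq_div_iff (hoccβ _).ne']

/-- **Characterization of the state-marginal importance ratio via the adversarial
functional of Liu et al.** Define
`L(ρ, f) = γ·E_{s∼d^{π_β}, a∼π_β(·|s), s'∼T(·|s,a)}[(ρ(s)·π(a|s)/π_β(a|s) − ρ(s'))·f(s')]
          + (1−γ)·E_{s₀∼d₀}[(1 − ρ(s₀))·f(s₀)]`.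
Then `L(ρ, f) = 0` for all `f : S → ℝ` iff `ρ = ρ^π = d^π/d^{π_β}`. -/
theorem adversarial_ratio_characterization
    {S A : Type} [Fintype S] [Fintype A]
    (d0 : S → ℝ) (T : S → A → S → ℝ) (π πβ : S → A → ℝ) (γ : ℝ)
    (hγ0 : 0 < γ) (hγ1 : γ < 1)
    (hd00 : ∀ s, 0 ≤ d0 s) (hd01 : ∑ s, d0 s = 1)
    (hT0 : ∀ s a s', 0 ≤ T s a s') (hT1 : ∀ s a, ∑ s', T s a s' = 1)
    (hπ0 : ∀ s a, 0 ≤ π s a) (hπ1 : ∀ s, ∑ a, π s a = 1)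
    (hβ0 : ∀ s a, 0 < πβ s a) (hβ1 : ∀ s, ∑ a, πβ s a = 1)
    (hoccβ : ∀ s, 0 < occ d0 T πβ γ s)
    (ρ : S → ℝ) :
    (∀ f : S → ℝ,
      γ * (∑ s, ∑ a, ∑ s', occ d0 T πβ γ s * πβ s a * T s a s' *
          ((ρ s * (π s a / πβ s a) - ρ s') * f s')) +
        (1 - γ) * (∑ s0, d0 s0 * ((1 - ρ s0) * f s0)) = 0) ↔
    (∀ s, ρ s = occ d0 T π γ s / occ d0 T πβ γ s) :=
  adversarial_ratio_characterization_general d0 T π πβ γ hγ0 hγ1 hT0 hT1 hπ0 hπ1 hβ0 hβ1 hoccβ ρ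
end

section
/- Let S × A be a finite set, and let d^{π_β} and d^π be two probability distributions on S × A with d^{π_β}(s,a) > 0 for all (s,a). Then the function x*(s,a) = d^π(s,a)/d^{π_β}(s,a) is the unique minimizer over all functions x : S × A → ℝ of the objective (1/2)·Σ_{(s,a)} d^{π_β}(s,a)·x(s,a)² − Σ_{(s,a)} d^π(s,a)·x(s,a); that is, the DualDICE objective (1/2)·E_{(s,a) ∼ d^{π_β}}[x(s,a)²] − E_{(s,a) ∼ d^π}[x(s,a)] is minimized exactly at the state-action density ratio. -/
open Finset

/-- **The DualDICE objective is minimized exactly at the state-action density ratio.**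
For probability distributions `d^{π_β}` (strictly positive) and `d^π` on the finite set
`S × A`, the function `x*(s,a) = d^π(s,a)/d^{π_β}(s,a)` is the unique minimizer over all
`x : S × A → ℝ` of `(1/2)·E_{(s,a)∼d^{π_β}}[x(s,a)²] − E_{(s,a)∼d^π}[x(s,a)]`. -/
theorem dualdice_objective_minimized_at_density_ratio
    {S A : Type} [Fintype S] [Fintype A]
    (dβ dπ : S × A → ℝ)
    (hβ0 : ∀ y, 0 < dβ y) (hβ1 : ∑ y, dβ y = 1)
    (hπ0 : ∀ y, 0 ≤ dπ y) (hπ1 : ∑ y, dπ y = 1) :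
    (∀ x : S × A → ℝ,
      (1 / 2) * ∑ y, dβ y * (fun y => dπ y / dβ y) y ^ 2 - ∑ y, dπ y * (fun y => dπ y / dβ y) y ≤
        (1 / 2) * ∑ y, dβ y * x y ^ 2 - ∑ y, dπ y * x y) ∧
    (∀ x : S × A → ℝ,
      (1 / 2) * ∑ y, dβ y * x y ^ 2 - ∑ y, dπ y * x y =
        (1 / 2) * ∑ y, dβ y * (fun y => dπ y / dβ y) y ^ 2 -
          ∑ y, dπ y * (fun y => dπ y / dβ y) y →
      x = fun y => dπ y / dβ y) := by
  have key : ∀ x : S × A → ℝ,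
      ((1 / 2) * ∑ y, dβ y * x y ^ 2 - ∑ y, dπ y * x y) -
        ((1 / 2) * ∑ y, dβ y * (dπ y / dβ y) ^ 2 - ∑ y, dπ y * (dπ y / dβ y)) =
      ∑ y, (1 / 2) * dβ y * (x y - dπ y / dβ y) ^ 2 := by
    intro x
    have h : ∀ y ∈ Finset.univ (α := S × A),
        (1 / 2) * dβ y * (x y - dπ y / dβ y) ^ 2 =
        ((1 / 2) * (dβ y * x y ^ 2) - dπ y * x y) -
          ((1 / 2) * (dβ y * (dπ y / dβ y) ^ 2) - dπ y * (dπ y / dβ y)) := by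
      intro y _
      have hb := (hβ0 y).ne'
      field_simp
      ring
    rw [Finset.sum_congr rfl h]
    simp [Finset.sum_sub_distrib, Finset.mul_sum]
  constructor
  · intro x
    have h := key x
    have hnn : 0 ≤ ∑ y, (1 / 2) * dβ y * (x y - dπ y / dβ y) ^ 2 :=
      Finset.sum_nonneg fun y _ => mul_nonneg (mul_nonneg (by norm_num) (hβ0 y).le) (sq_nonneg _)
    simp only []
    linarith [h, hnn]
  · intro x hx
    have h := key x
    simp only [] at hx
    rw [hx, sub_self] at h
    have hz : ∀ y ∈ Finset.univ (α := S × A),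
        (1 / 2) * dβ y * (x y - dπ y / dβ y) ^ 2 = 0 := by
      refine (Finset.sum_eq_zero_iff_of_nonneg (fun y _ => mul_nonneg (mul_nonneg (by norm_num) (hβ0 y).le) (sq_nonneg _))).1 h.symm
    funext y
    have := hz y (Finset.mem_univ y)
    have hb := (hβ0 y).ne'
    have : (x y - dπ y / dβ y) ^ 2 = 0 := by
      rcases mul_eq_zero.1 this with h1 | h2
      · exact absurd h1 (mul_pos (by norm_num) (hβ0 y)).ne'
      · exact h2
    have := pow_eq_zero_iff (n := 2) (by norm_num) |>.1 this
    linarith [sub_eq_zero.1 this]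
end

section
/- Let Y be a finite set, let p and q be probability distributions on Y with q(y) > 0 for all y, and let f : ℝ → ℝ be a convex function. Define the f-divergence D_f(p, q) = Σ_y q(y)·f(p(y)/q(y)) and the convex conjugate f*(t) = sup_{u ∈ ℝ} (t·u − f(u)) ∈ ℝ ∪ {+∞}. Then the f-divergence admits the variational representation D_f(p, q) = sup over functions x : Y → ℝ of ( Σ_y p(y)·x(y) − Σ_y q(y)·f*(x(y)) ), where the supremum is taken over all x for which f*(x(y)) is finite for every y. -/
open Finset

/-- Convex (Fenchel) conjugate `f*(t) = sup_{u ∈ ℝ} (t·u − f(u))`, valued in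
`ℝ ∪ {+∞}` (represented as `EReal`; it never takes the value `−∞` since `f` is
real-valued). -/
noncomputable def fenchelConj (f : ℝ → ℝ) (t : ℝ) : EReal :=
  ⨆ u : ℝ, ((t * u - f u : ℝ) : EReal)

lemma coe_le_fenchelConj (f : ℝ → ℝ) (t u : ℝ) :
    ((t * u - f u : ℝ) : EReal) ≤ fenchelConj f t :=
  le_iSup (fun u : ℝ => ((t * u - f u : ℝ) : EReal)) u

/-- Fenchel–Young inequality (when the conjugate is finite). -/
lemma fenchel_young (f : ℝ → ℝ) (t u : ℝ) (h : fenchelConj f t ≠ ⊤) :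
    t * u - (fenchelConj f t).toReal ≤ f u := by
  have h1 := coe_le_fenchelConj f t u
  have h2 := EReal.toReal_le_toReal h1 (EReal.coe_ne_bot _) h
  rw [EReal.toReal_coe] at h2
  linarith

/-- A convex function on `ℝ` has a (global) subgradient at every point. -/
lemma exists_subgradient {f : ℝ → ℝ} (hf : ConvexOn ℝ Set.univ f) (a : ℝ) :
    ∃ t : ℝ, ∀ v : ℝ, t * (v - a) ≤ f v - f a := by
  set S : Set ℝ := (fun v => (f v - f a) / (v - a)) '' Set.Iio a with hS
  have hne : S.Nonempty := ⟨(f (a - 1) - f a) / (a - 1 - a), ⟨a - 1, by simp, rfl⟩⟩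
  have hbdd : BddAbove S := by
    refine ⟨(f (a + 1) - f a) / (a + 1 - a), ?_⟩
    rintro s ⟨v, hv, rfl⟩
    exact hf.secant_mono trivial trivial trivial (ne_of_lt hv) (by linarith)
      (by linarith [Set.mem_Iio.mp hv])
  set t := sSup S with ht
  refine ⟨t, fun v => ?_⟩
  rcases lt_trichotomy v a with hva | hva | hva
  · -- v < a : slope f v a ≤ t
    have hmem : (f v - f a) / (v - a) ∈ S := ⟨v, hva, rfl⟩
    have := le_csSup hbdd hmem
    have hva' : v - a < 0 := by linarith
    rw [div_le_iff_of_neg hva'] at this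
    linarith [this]
  · simp [hva]
  · -- a < v : t ≤ slope f a v
    have : t ≤ (f v - f a) / (v - a) := by
      apply csSup_le hne
      rintro s ⟨w, hw, rfl⟩
      exact hf.secant_mono trivial trivial trivial (ne_of_lt hw) (ne_of_gt hva)
        (by linarith [Set.mem_Iio.mp hw])
    have hva' : (0:ℝ) < v - a := by linarith
    rw [le_div_iff₀ hva'] at this
    linarith

/-- For a subgradient `t` at `a`, the conjugate is exactly `t·a − f a`. -/
lemma fenchelConj_of_subgradient {f : ℝ → ℝ} {t a : ℝ}
    (h : ∀ v : ℝ, t * (v - a) ≤ f v - f a) :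
    fenchelConj f t = ((t * a - f a : ℝ) : EReal) := by
  apply le_antisymm
  · apply iSup_le
    intro u
    have := h u
    exact_mod_cast EReal.coe_le_coe_iff.mpr (by nlinarith [h u])
  · exact coe_le_fenchelConj f t a

/-- **Variational representation of the f-divergence.**
For probability distributions `p, q` on a finite set `Y` with `q` strictly positive and
a convex `f : ℝ → ℝ`,
`D_f(p,q) = Σ_y q(y)·f(p(y)/q(y))` equals the supremum, over all `x : Y → ℝ` such that
`f*(x(y))` is finite for every `y`, of `Σ_y p(y)·x(y) − Σ_y q(y)·f*(x(y))`. -/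
theorem f_divergence_variational_form
    {Y : Type} [Fintype Y]
    (p q : Y → ℝ)
    (hp0 : ∀ y, 0 ≤ p y) (hp1 : ∑ y, p y = 1)
    (hq0 : ∀ y, 0 < q y) (hq1 : ∑ y, q y = 1)
    (f : ℝ → ℝ) (hf : ConvexOn ℝ Set.univ f) :
    (∑ y, q y * f (p y / q y)) =
      sSup { v : ℝ | ∃ x : Y → ℝ,
        (∀ y, fenchelConj f (x y) ≠ ⊤) ∧
        v = ∑ y, p y * x y - ∑ y, q y * (fenchelConj f (x y)).toReal } := by
  set D := ∑ y, q y * f (p y / q y) with hD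
  symm
  apply IsGreatest.csSup_eq
  constructor
  · -- membership: take the subgradient at each ratio
    choose t ht using fun y => exists_subgradient hf (p y / q y)
    refine ⟨t, fun y => ?_, ?_⟩
    · rw [fenchelConj_of_subgradient (ht y)]
      exact EReal.coe_ne_top _
    · have key : ∀ y, (fenchelConj f (t y)).toReal
          = t y * (p y / q y) - f (p y / q y) := fun y => by
        rw [fenchelConj_of_subgradient (ht y), EReal.toReal_coe]
      rw [← Finset.sum_sub_distrib]
      apply Finset.sum_congr rfl
      intro y _
      rw [key y]
      have hq := (hq0 y).ne'
      field_simp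
      ring
  · -- upper bound
    rintro v ⟨x, hx, rfl⟩
    rw [← Finset.sum_sub_distrib]
    apply Finset.sum_le_sum
    intro y _
    have hfy := fenchel_young f (x y) (p y / q y) (hx y)
    have hq := (hq0 y).ne'
    have hpq : p y = q y * (p y / q y) := by field_simp
    have h2 := mul_le_mul_of_nonneg_left hfy (hq0 y).le
    have h3 : p y * x y = q y * (x y * (p y / q y)) := by
      field_simp
    rw [h3, ← mul_sub]
    exact h2
end

section
/- Let M be a finite MDP with discount γ ∈ (0,1), let π be a policy, let π_β and μ be action distributions with π_β(a|s) > 0 for all (s,a) and μ(a|s) ≥ 0, and let α ≥ 0. Consider the conservative (CQL) backup operator Q ↦ B^π Q − α·(μ/π_β), i.e., (B̃Q)(s,a) = r(s,a) + γ·Σ_{s'} T(s'|s,a)·Σ_{a'} π(a'|s')·Q(s',a') − α·μ(a|s)/π_β(a|s). Then: (i) B̃ is a γ-contraction in the sup norm on functions S × A → ℝ and hence has a unique fixed point Q̂; and (ii) this fixed point is a pointwise lower bound on the true Q-function: Q̂(s,a) ≤ Q^π(s,a) for all (s,a) ∈ S × A. -/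
/-
Both operators are `Q ↦ c + γ • P Q` for the same averaging operator
`(P Q)(s,a) = E_{s'∼T(·|s,a), a'∼π(·|s')} Q(s',a')`, which does not increase the sup norm;
this gives the contraction. The fixed points differ by the nonnegative penalty
`α μ/π_β`, so `D = Q̂ - Q^π` satisfies `D ≤ γ • P D`; at a maximiser of `D` this reads
`max D ≤ γ max D`, hence `D ≤ 0`.
-/

open Finset

/-- Bellman operator `B^π` for policy `π`:
`(B^π Q)(s,a) = r(s,a) + γ·E_{s'∼T(·|s,a), a'∼π(·|s')}[Q(s',a')]`. -/
noncomputable def bellmanOp {S A : Type} [Fintype S] [Fintype A]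
    (T : S → A → S → ℝ) (r : S → A → ℝ) (γ : ℝ) (π : S → A → ℝ)
    (Q : S × A → ℝ) : S × A → ℝ :=
  fun sa => r sa.1 sa.2 + γ * ∑ s', T sa.1 sa.2 s' * ∑ a', π s' a' * Q (s', a')

/-- Conservative (CQL) backup operator `B̃ Q = B^π Q − α·(μ/π_β)`. -/
noncomputable def cqlOp {S A : Type} [Fintype S] [Fintype A]
    (T : S → A → S → ℝ) (r : S → A → ℝ) (γ : ℝ) (π πβ μ : S → A → ℝ) (α : ℝ)
    (Q : S × A → ℝ) : S × A → ℝ :=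
  fun sa => bellmanOp T r γ π Q sa - α * μ sa.1 sa.2 / πβ sa.1 sa.2

theorem sum_mul_le_of_mem_stdSimplex {ι : Type*} [Fintype ι] {w f : ι → ℝ} {c : ℝ}
    (hw : w ∈ stdSimplex ℝ ι) (hf : ∀ i, f i ≤ c) : ∑ i, w i * f i ≤ c :=
  calc ∑ i, w i * f i ≤ ∑ i, w i * c :=
        sum_le_sum fun i _ => mul_le_mul_of_nonneg_left (hf i) (hw.1 i)
    _ = c := by rw [← sum_mul, hw.2, one_mul]

section Bellman

variable {S A : Type} [Fintype S] [Fintype A]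

noncomputable def nextExpect (T : S → A → S → ℝ) (π : S → A → ℝ) (Q : S × A → ℝ) :
    S × A → ℝ :=
  fun sa => ∑ s', T sa.1 sa.2 s' * ∑ a', π s' a' * Q (s', a')

variable {T : S → A → S → ℝ} {π : S → A → ℝ}

theorem nextExpect_sub (Q₁ Q₂ : S × A → ℝ) :
    nextExpect T π (Q₁ - Q₂) = nextExpect T π Q₁ - nextExpect T π Q₂ := by
  funext sa
  simp only [nextExpect, Pi.sub_apply, mul_sub, sum_sub_distrib]

theorem nextExpect_neg (Q : S × A → ℝ) : nextExpect T π (-Q) = -nextExpect T π Q := by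
  funext sa
  simp only [nextExpect, Pi.neg_apply, mul_neg, sum_neg_distrib]

theorem nextExpect_le_of_forall_le (hT : ∀ s a, T s a ∈ stdSimplex ℝ S)
    (hπ : ∀ s, π s ∈ stdSimplex ℝ A) {Q : S × A → ℝ} {c : ℝ} (hQ : ∀ y, Q y ≤ c)
    (sa : S × A) : nextExpect T π Q sa ≤ c :=
  sum_mul_le_of_mem_stdSimplex (hT _ _) fun s' =>
    sum_mul_le_of_mem_stdSimplex (hπ s') fun a' => hQ (s', a')

theorem norm_nextExpect_le (hT : ∀ s a, T s a ∈ stdSimplex ℝ S)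
    (hπ : ∀ s, π s ∈ stdSimplex ℝ A) (Q : S × A → ℝ) : ‖nextExpect T π Q‖ ≤ ‖Q‖ := by
  refine (pi_norm_le_iff_of_nonneg (norm_nonneg Q)).2 fun sa => ?_
  have hle : ∀ y, Q y ≤ ‖Q‖ := fun y => (le_abs_self _).trans (norm_le_pi_norm Q y)
  have hge : ∀ y, (-Q) y ≤ ‖Q‖ := fun y => (neg_le_abs _).trans (norm_le_pi_norm Q y)
  have upper := nextExpect_le_of_forall_le hT hπ hle sa
  have lower := nextExpect_le_of_forall_le hT hπ hge sa
  rw [nextExpect_neg, Pi.neg_apply] at lower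
  exact abs_le.2 ⟨by linarith, upper⟩

theorem nonpos_of_le_smul_nextExpect (hT : ∀ s a, T s a ∈ stdSimplex ℝ S)
    (hπ : ∀ s, π s ∈ stdSimplex ℝ A) {γ : ℝ} (hγ0 : 0 ≤ γ) (hγ1 : γ < 1)
    {D : S × A → ℝ} (hD : D ≤ γ • nextExpect T π D) (sa : S × A) : D sa ≤ 0 := by
  have : Nonempty (S × A) := ⟨sa⟩
  obtain ⟨x, hx⟩ := Finite.exists_max D
  have hmax : D x ≤ γ * D x :=
    (hD x).trans (mul_le_mul_of_nonneg_left (nextExpect_le_of_forall_le hT hπ hx x) hγ0)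
  nlinarith [hx sa]

variable {r : S → A → ℝ} {γ : ℝ}

theorem bellmanOp_sub_bellmanOp (Q₁ Q₂ : S × A → ℝ) :
    bellmanOp T r γ π Q₁ - bellmanOp T r γ π Q₂ = γ • nextExpect T π (Q₁ - Q₂) := by
  rw [nextExpect_sub]
  funext sa
  simp only [bellmanOp, nextExpect, Pi.sub_apply, Pi.smul_apply, smul_eq_mul]
  ring

variable {πβ μ : S → A → ℝ} {α : ℝ}

theorem cqlOp_sub_cqlOp (Q₁ Q₂ : S × A → ℝ) :
    cqlOp T r γ π πβ μ α Q₁ - cqlOp T r γ π πβ μ α Q₂ =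
      bellmanOp T r γ π Q₁ - bellmanOp T r γ π Q₂ := by
  funext sa
  simp only [cqlOp, Pi.sub_apply, sub_sub_sub_cancel_right]

theorem cqlOp_le_bellmanOp (hβ : ∀ s a, 0 ≤ πβ s a) (hμ : ∀ s a, 0 ≤ μ s a) (hα : 0 ≤ α)
    (Q : S × A → ℝ) : cqlOp T r γ π πβ μ α Q ≤ bellmanOp T r γ π Q := fun _ =>
  sub_le_self _ (div_nonneg (mul_nonneg hα (hμ _ _)) (hβ _ _))

theorem norm_cqlOp_sub_cqlOp_le (hT : ∀ s a, T s a ∈ stdSimplex ℝ S)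
    (hπ : ∀ s, π s ∈ stdSimplex ℝ A) (hγ : 0 ≤ γ) (Q₁ Q₂ : S × A → ℝ) :
    ‖cqlOp T r γ π πβ μ α Q₁ - cqlOp T r γ π πβ μ α Q₂‖ ≤ γ * ‖Q₁ - Q₂‖ := by
  rw [cqlOp_sub_cqlOp, bellmanOp_sub_bellmanOp, norm_smul, Real.norm_of_nonneg hγ]
  exact mul_le_mul_of_nonneg_left (norm_nextExpect_le hT hπ _) hγ

theorem contractingWith_cqlOp (hT : ∀ s a, T s a ∈ stdSimplex ℝ S)
    (hπ : ∀ s, π s ∈ stdSimplex ℝ A) (hγ0 : 0 ≤ γ) (hγ1 : γ < 1) :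
    ContractingWith ⟨γ, hγ0⟩ (cqlOp T r γ π πβ μ α) :=
  ⟨hγ1, LipschitzWith.of_dist_le_mul fun Q₁ Q₂ => by
    rw [dist_eq_norm, dist_eq_norm]
    exact norm_cqlOp_sub_cqlOp_le hT hπ hγ0 Q₁ Q₂⟩

theorem cqlOp_fixedPoint_le_bellmanOp_fixedPoint (hT : ∀ s a, T s a ∈ stdSimplex ℝ S)
    (hπ : ∀ s, π s ∈ stdSimplex ℝ A) (hγ0 : 0 ≤ γ) (hγ1 : γ < 1)
    (hβ : ∀ s a, 0 ≤ πβ s a) (hμ : ∀ s a, 0 ≤ μ s a) (hα : 0 ≤ α) {Qhat Qpi : S × A → ℝ}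
    (hhat : cqlOp T r γ π πβ μ α Qhat = Qhat) (hpi : bellmanOp T r γ π Qpi = Qpi) :
    Qhat ≤ Qpi := by
  have hD : Qhat - Qpi ≤ γ • nextExpect T π (Qhat - Qpi) := by
    rw [← bellmanOp_sub_bellmanOp (r := r)]
    nth_rewrite 1 [← hhat, ← hpi]
    exact sub_le_sub_right (cqlOp_le_bellmanOp hβ hμ hα Qhat) _
  exact fun sa => sub_nonpos.1 (nonpos_of_le_smul_nextExpect hT hπ hγ0 hγ1 hD sa)

end Bellman

/-- **The conservative (CQL) backup is a `γ`-contraction and its fixed point is a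
pointwise lower bound on the true Q-function.**
(i) `B̃` is a `γ`-contraction in the sup norm on `S × A → ℝ`, hence has a unique fixed
point `Q̂`; (ii) if `Q̂` is the fixed point of `B̃` and `Q^π` is the fixed point of `B^π`
(the true Q-function of `π`), then `Q̂(s,a) ≤ Q^π(s,a)` for all `(s,a)`. -/
theorem cql_contraction_and_lower_bound
    {S A : Type} [Fintype S] [Fintype A]
    (T : S → A → S → ℝ) (r : S → A → ℝ) (γ : ℝ)
    (π πβ μ : S → A → ℝ) (α : ℝ)
    (hγ0 : 0 < γ) (hγ1 : γ < 1)
    (hT0 : ∀ s a s', 0 ≤ T s a s') (hT1 : ∀ s a, ∑ s', T s a s' = 1)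
    (hπ0 : ∀ s a, 0 ≤ π s a) (hπ1 : ∀ s, ∑ a, π s a = 1)
    (hβ0 : ∀ s a, 0 < πβ s a) (hμ0 : ∀ s a, 0 ≤ μ s a)
    (hα : 0 ≤ α) :
    (∀ Q₁ Q₂ : S × A → ℝ,
      ‖cqlOp T r γ π πβ μ α Q₁ - cqlOp T r γ π πβ μ α Q₂‖ ≤ γ * ‖Q₁ - Q₂‖) ∧
    (∃! Qhat : S × A → ℝ, cqlOp T r γ π πβ μ α Qhat = Qhat) ∧
    (∀ Qhat Qpi : S × A → ℝ,
      cqlOp T r γ π πβ μ α Qhat = Qhat → bellmanOp T r γ π Qpi = Qpi →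
      ∀ sa : S × A, Qhat sa ≤ Qpi sa) := by
  have hT : ∀ s a, T s a ∈ stdSimplex ℝ S := fun s a => ⟨hT0 s a, hT1 s a⟩
  have hπ : ∀ s, π s ∈ stdSimplex ℝ A := fun s => ⟨hπ0 s, hπ1 s⟩
  have hβ : ∀ s a, 0 ≤ πβ s a := fun s a => (hβ0 s a).le
  have hc := contractingWith_cqlOp (r := r) (πβ := πβ) (μ := μ) (α := α) hT hπ hγ0.le hγ1
  refine ⟨norm_cqlOp_sub_cqlOp_le hT hπ hγ0.le, ?_, fun Qhat Qpi hhat hpi =>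
    cqlOp_fixedPoint_le_bellmanOp_fixedPoint hT hπ hγ0.le hγ1 hβ hμ0 hα hhat hpi⟩
  exact ⟨hc.fixedPoint _, hc.fixedPoint_isFixedPt, fun Q hQ => hc.fixedPoint_unique hQ⟩
end

section
/- Let M be a finite MDP with discount γ ∈ (0,1), and let π and π_β be two policies such that D_TV(π(·|s), π_β(·|s)) ≤ ε for every state s. Then the discounted state occupancies satisfy D_TV(d^π, d^{π_β}) ≤ γ·ε/(1−γ); i.e., bounding the per-state divergence between the learned policy and the behavior policy bounds the state distributional shift, with a constant that degrades with the effective horizon 1/(1−γ). -/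
open Finset

/-- Total variation distance between two distributions on a finite type. -/
noncomputable def tvDist {Y : Type} [Fintype Y] (p q : Y → ℝ) : ℝ :=
  (1 / 2) * ∑ y, |p y - q y|

section Aux

variable {S A : Type} [Fintype S] [Fintype A]

lemma sd_nonneg (d0 : S → ℝ) (T : S → A → S → ℝ) (π : S → A → ℝ)
    (hd00 : ∀ s, 0 ≤ d0 s) (hT0 : ∀ s a s', 0 ≤ T s a s') (hπ0 : ∀ s a, 0 ≤ π s a) :
    ∀ t s, 0 ≤ stateDist d0 T π t s := by
  intro t
  induction t with
  | zero => exact hd00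
  | succ t ih =>
    intro s'
    simp only [stateDist]
    refine Finset.sum_nonneg fun s _ => Finset.sum_nonneg fun a _ => ?_
    have := ih s
    have := hπ0 s a
    have := hT0 s a s'
    positivity

lemma sd_sum (d0 : S → ℝ) (T : S → A → S → ℝ) (π : S → A → ℝ)
    (hd01 : ∑ s, d0 s = 1) (hT1 : ∀ s a, ∑ s', T s a s' = 1) (hπ1 : ∀ s, ∑ a, π s a = 1) :
    ∀ t, ∑ s, stateDist d0 T π t s = 1 := by
  intro t
  induction t with
  | zero => simpa [stateDist] using hd01
  | succ t ih =>
    simp only [stateDist]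
    rw [Finset.sum_comm]
    calc ∑ s, ∑ s', ∑ a, stateDist d0 T π t s * π s a * T s a s'
        = ∑ s, ∑ a, stateDist d0 T π t s * π s a * ∑ s', T s a s' := by
          refine Finset.sum_congr rfl fun s _ => ?_
          rw [Finset.sum_comm]
          exact Finset.sum_congr rfl fun a _ => (Finset.mul_sum _ _ _).symm
      _ = ∑ s, stateDist d0 T π t s * ∑ a, π s a := by
          refine Finset.sum_congr rfl fun s _ => ?_
          simp [hT1, Finset.mul_sum]
      _ = 1 := by simp [hπ1, ih]

end Aux

/-- **State distributional shift bound.**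
If `D_TV(π(·|s), π_β(·|s)) ≤ ε` for every state `s`, then the discounted state
occupancies satisfy `D_TV(d^π, d^{π_β}) ≤ γ·ε/(1−γ)`. -/
theorem occupancy_tv_bound
    {S A : Type} [Fintype S] [Fintype A]
    (d0 : S → ℝ) (T : S → A → S → ℝ) (π πβ : S → A → ℝ) (γ : ℝ) (ε : ℝ)
    (hγ0 : 0 < γ) (hγ1 : γ < 1)
    (hd00 : ∀ s, 0 ≤ d0 s) (hd01 : ∑ s, d0 s = 1)
    (hT0 : ∀ s a s', 0 ≤ T s a s') (hT1 : ∀ s a, ∑ s', T s a s' = 1)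
    (hπ0 : ∀ s a, 0 ≤ π s a) (hπ1 : ∀ s, ∑ a, π s a = 1)
    (hβ0 : ∀ s a, 0 ≤ πβ s a) (hβ1 : ∀ s, ∑ a, πβ s a = 1)
    (hε : ∀ s, tvDist (π s) (πβ s) ≤ ε) :
    tvDist (occ d0 T π γ) (occ d0 T πβ γ) ≤ γ * ε / (1 - γ) := by
  have hS : Nonempty S := by
    rcases isEmpty_or_nonempty S with h | h
    · simp [Finset.univ_eq_empty] at hd01
    · exact h
  obtain ⟨s0⟩ := hS
  have hε0 : 0 ≤ ε := le_trans (by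
    have : 0 ≤ ∑ y, |π s0 y - πβ s0 y| := Finset.sum_nonneg fun y _ => abs_nonneg _
    unfold tvDist; linarith) (hε s0)
  have h1γ : 0 < 1 - γ := by linarith
  -- abbreviations
  set dπ := stateDist d0 T π with hdπ
  set dβ := stateDist d0 T πβ with hdβ
  have hβnn : ∀ t s, 0 ≤ dβ t s := sd_nonneg d0 T πβ hd00 hT0 hβ0
  have hπnn : ∀ t s, 0 ≤ dπ t s := sd_nonneg d0 T π hd00 hT0 hπ0
  have hβsum : ∀ t, ∑ s, dβ t s = 1 := sd_sum d0 T πβ hd01 hT1 hβ1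
  have hπsum : ∀ t, ∑ s, dπ t s = 1 := sd_sum d0 T π hd01 hT1 hπ1
  have hπle1 : ∀ t s, dπ t s ≤ 1 := by
    intro t s
    have := Finset.single_le_sum (f := fun s => dπ t s) (fun i _ => hπnn t i) (Finset.mem_univ s)
    rwa [hπsum t] at this
  have hβle1 : ∀ t s, dβ t s ≤ 1 := by
    intro t s
    have := Finset.single_le_sum (f := fun s => dβ t s) (fun i _ => hβnn t i) (Finset.mem_univ s)
    rwa [hβsum t] at this
  -- per-step bound on TV of state marginals
  have key : ∀ t : ℕ, ∑ s, |dπ t s - dβ t s| ≤ 2 * t * ε := by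
    intro t
    induction t with
    | zero => simp [hdπ, hdβ, stateDist]
    | succ t ih =>
      have hstep : ∑ s', |dπ (t+1) s' - dβ (t+1) s'| ≤ (∑ s, |dπ t s - dβ t s|) + 2 * ε := by
        have habs : ∀ s', |dπ (t+1) s' - dβ (t+1) s'| ≤
            ∑ s, ∑ a, (|dπ t s - dβ t s| * π s a + dβ t s * |π s a - πβ s a|) * T s a s' := by
          intro s'
          have : dπ (t+1) s' - dβ (t+1) s' =
              ∑ s, ∑ a, (dπ t s * π s a - dβ t s * πβ s a) * T s a s' := by
            simp only [hdπ, hdβ, stateDist, ← Finset.sum_sub_distrib]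
            refine Finset.sum_congr rfl fun s _ => Finset.sum_congr rfl fun a _ => by ring
          rw [this]
          calc |∑ s, ∑ a, (dπ t s * π s a - dβ t s * πβ s a) * T s a s'|
              ≤ ∑ s, ∑ a, |(dπ t s * π s a - dβ t s * πβ s a) * T s a s'| := by
                refine le_trans (Finset.abs_sum_le_sum_abs _ _) ?_
                exact Finset.sum_le_sum fun s _ => Finset.abs_sum_le_sum_abs _ _
            _ ≤ ∑ s, ∑ a, (|dπ t s - dβ t s| * π s a + dβ t s * |π s a - πβ s a|) * T s a s' := by
                refine Finset.sum_le_sum fun s _ => Finset.sum_le_sum fun a _ => ?_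
                rw [abs_mul, abs_of_nonneg (hT0 s a s')]
                refine mul_le_mul_of_nonneg_right ?_ (hT0 s a s')
                calc |dπ t s * π s a - dβ t s * πβ s a|
                    = |(dπ t s - dβ t s) * π s a + dβ t s * (π s a - πβ s a)| := by ring_nf
                  _ ≤ |(dπ t s - dβ t s) * π s a| + |dβ t s * (π s a - πβ s a)| := abs_add_le _ _
                  _ = |dπ t s - dβ t s| * π s a + dβ t s * |π s a - πβ s a| := by
                      rw [abs_mul, abs_mul, abs_of_nonneg (hπ0 s a), abs_of_nonneg (hβnn t s)]
        calc ∑ s', |dπ (t+1) s' - dβ (t+1) s'|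
            ≤ ∑ s', ∑ s, ∑ a, (|dπ t s - dβ t s| * π s a + dβ t s * |π s a - πβ s a|) * T s a s' :=
              Finset.sum_le_sum fun s' _ => habs s'
          _ = ∑ s, ∑ a, (|dπ t s - dβ t s| * π s a + dβ t s * |π s a - πβ s a|) *
                ∑ s', T s a s' := by
              rw [Finset.sum_comm]
              refine Finset.sum_congr rfl fun s _ => ?_
              rw [Finset.sum_comm]
              exact Finset.sum_congr rfl fun a _ => (Finset.mul_sum _ _ _).symm
          _ = ∑ s, (|dπ t s - dβ t s| * ∑ a, π s a + dβ t s * ∑ a, |π s a - πβ s a|) := by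
              refine Finset.sum_congr rfl fun s _ => ?_
              simp [hT1, Finset.mul_sum, Finset.sum_add_distrib]
          _ ≤ ∑ s, (|dπ t s - dβ t s| + dβ t s * (2 * ε)) := by
              refine Finset.sum_le_sum fun s _ => ?_
              rw [hπ1 s, mul_one]
              have h2ε : ∑ a, |π s a - πβ s a| ≤ 2 * ε := by
                have := hε s
                unfold tvDist at this
                linarith
              have := mul_le_mul_of_nonneg_left h2ε (hβnn t s)
              linarith
          _ = (∑ s, |dπ t s - dβ t s|) + 2 * ε := by
              rw [Finset.sum_add_distrib, ← Finset.sum_mul, hβsum t]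
              ring
      calc ∑ s, |dπ (t+1) s - dβ (t+1) s| ≤ (∑ s, |dπ t s - dβ t s|) + 2 * ε := hstep
        _ ≤ 2 * t * ε + 2 * ε := by linarith
        _ = 2 * (t + 1 : ℕ) * ε := by push_cast; ring
  -- summability facts
  have hsumπ : ∀ s, Summable (fun t : ℕ => γ ^ t * dπ t s) := by
    intro s
    refine Summable.of_nonneg_of_le (fun t => ?_) (fun t => ?_)
      (summable_geometric_of_lt_one hγ0.le hγ1)
    · have := hπnn t s; positivity
    have := hπle1 t s
    nlinarith [pow_nonneg hγ0.le t]
  have hsumβ : ∀ s, Summable (fun t : ℕ => γ ^ t * dβ t s) := by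
    intro s
    refine Summable.of_nonneg_of_le (fun t => ?_) (fun t => ?_)
      (summable_geometric_of_lt_one hγ0.le hγ1)
    · have := hβnn t s; positivity
    have := hβle1 t s
    nlinarith [pow_nonneg hγ0.le t]
  have hsumabs : ∀ s, Summable (fun t : ℕ => γ ^ t * |dπ t s - dβ t s|) := by
    intro s
    refine Summable.of_nonneg_of_le (fun t => by positivity) (fun t => ?_)
      ((summable_geometric_of_lt_one hγ0.le hγ1).mul_left 2)
    have h1 := hπle1 t s; have h2 := hβle1 t s
    have h3 := hπnn t s; have h4 := hβnn t s
    have : |dπ t s - dβ t s| ≤ 2 := by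
      rw [abs_le]; constructor <;> linarith
    nlinarith [pow_nonneg hγ0.le t]
  have hsumtε : Summable (fun t : ℕ => γ ^ t * (2 * t * ε)) := by
    have h := (hasSum_coe_mul_geometric_of_norm_lt_one (r := γ)
      (by rwa [Real.norm_eq_abs, abs_of_pos hγ0])).summable
    have := h.mul_left (2 * ε)
    refine this.congr fun t => ?_
    ring
  -- pointwise bound on |occ difference|
  have hocc : ∀ s, |occ d0 T π γ s - occ d0 T πβ γ s| ≤
      (1 - γ) * ∑' t : ℕ, γ ^ t * |dπ t s - dβ t s| := by
    intro s
    unfold occ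
    rw [← mul_sub, abs_mul, abs_of_pos h1γ, ← Summable.tsum_sub (hsumπ s) (hsumβ s)]
    refine mul_le_mul_of_nonneg_left ?_ h1γ.le
    have h1 : ∀ t : ℕ, |γ ^ t * dπ t s - γ ^ t * dβ t s| = γ ^ t * |dπ t s - dβ t s| := by
      intro t
      rw [← mul_sub, abs_mul, abs_of_nonneg (pow_nonneg hγ0.le t)]
    calc |∑' t : ℕ, (γ ^ t * dπ t s - γ ^ t * dβ t s)|
        ≤ ∑' t : ℕ, |γ ^ t * dπ t s - γ ^ t * dβ t s| := by
          have hs : Summable fun t : ℕ => |γ ^ t * dπ t s - γ ^ t * dβ t s| :=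
            (hsumabs s).congr fun t => (h1 t).symm
          simpa [Real.norm_eq_abs] using norm_tsum_le_tsum_norm
            (f := fun t : ℕ => γ ^ t * dπ t s - γ ^ t * dβ t s)
            (by simpa [Real.norm_eq_abs] using hs)
      _ = ∑' t : ℕ, γ ^ t * |dπ t s - dβ t s| := tsum_congr h1
  -- sum over s and conclude
  have hswap : ∑ s, ∑' t : ℕ, γ ^ t * |dπ t s - dβ t s|
      = ∑' t : ℕ, ∑ s, γ ^ t * |dπ t s - dβ t s| :=
    (Summable.tsum_finsetSum (fun s _ => hsumabs s)).symm
  have hmain : ∑ s, |occ d0 T π γ s - occ d0 T πβ γ s| ≤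
      (1 - γ) * (2 * ε * (γ / (1 - γ) ^ 2)) := by
    calc ∑ s, |occ d0 T π γ s - occ d0 T πβ γ s|
        ≤ ∑ s, (1 - γ) * ∑' t : ℕ, γ ^ t * |dπ t s - dβ t s| :=
          Finset.sum_le_sum fun s _ => hocc s
      _ = (1 - γ) * ∑' t : ℕ, ∑ s, γ ^ t * |dπ t s - dβ t s| := by
          rw [← Finset.mul_sum, hswap]
      _ ≤ (1 - γ) * ∑' t : ℕ, γ ^ t * (2 * t * ε) := by
          refine mul_le_mul_of_nonneg_left ?_ h1γ.le
          refine Summable.tsum_le_tsum (fun t => ?_) ?_ hsumtε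
          · rw [← Finset.mul_sum]
            exact mul_le_mul_of_nonneg_left (key t) (pow_nonneg hγ0.le t)
          · exact summable_sum fun s _ => hsumabs s
      _ = (1 - γ) * (2 * ε * (γ / (1 - γ) ^ 2)) := by
          congr 1
          have h := tsum_coe_mul_geometric_of_norm_lt_one (r := γ)
            (by rwa [Real.norm_eq_abs, abs_of_pos hγ0])
          calc ∑' t : ℕ, γ ^ t * (2 * t * ε) = ∑' t : ℕ, (2 * ε) * ((t : ℝ) * γ ^ t) :=
                tsum_congr fun t => by ring
            _ = (2 * ε) * ∑' t : ℕ, (t : ℝ) * γ ^ t := by rw [tsum_mul_left]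
            _ = 2 * ε * (γ / (1 - γ) ^ 2) := by rw [h]
  unfold tvDist
  have hgoal : (1 - γ) * (2 * ε * (γ / (1 - γ) ^ 2)) = 2 * (γ * ε / (1 - γ)) := by
    field_simp
  rw [hgoal] at hmain
  linarith
end

section
/- Let S be a finite state space and A a finite action space, let T be the true transition kernel and T̂ a learned model, let r : S × A → ℝ be a reward function, γ ∈ (0,1), and π a policy. Suppose u : S × A → ℝ≥0 is an error oracle satisfying |Σ_{s'} (T̂(s'|s,a) − T(s'|s,a))·V^π_T(s')| ≤ u(s,a) for all (s,a), where V^π_T is the value function of π under the true dynamics T. Then the expected discounted return of π in the model MDP with dynamics T̂ and the uncertainty-penalized reward r̃(s,a) = r(s,a) − γ·u(s,a) lower-bounds the true return: J_{T̂, r̃}(π) ≤ J_{T, r}(π). (This is the conservative model-based guarantee underlying MOPO: optimizing the policy against a model with a penalized reward cannot overestimate real performance.) -/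
open Finset

/-- Infinite-horizon expected discounted return
`J_{T,r}(π) = E[Σ_{t=0}^∞ γ^t r(s_t, a_t)]` under dynamics `T` and reward `r`. -/
noncomputable def Jinf {S A : Type} [Fintype S] [Fintype A]
    (d0 : S → ℝ) (T : S → A → S → ℝ) (π : S → A → ℝ) (r : S → A → ℝ) (γ : ℝ) : ℝ :=
  ∑' t : ℕ, γ ^ t * ∑ s, ∑ a, stateDist d0 T π t s * π s a * r s a

/-- Value function `V^π_T(s) = E[Σ_{t=0}^∞ γ^t r(s_t,a_t) | s₀ = s]` of `π` under
dynamics `T`, i.e. the return starting from the point mass at `s`. -/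
noncomputable def Vpi {S A : Type} [Fintype S] [Fintype A] [DecidableEq S]
    (T : S → A → S → ℝ) (π : S → A → ℝ) (r : S → A → ℝ) (γ : ℝ) (s : S) : ℝ :=
  Jinf (fun s' => if s' = s then 1 else 0) T π r γ

/-! Let `V` be the true value function of `π` and `Δ(s,a) = Σ_{s'} (T̂ − T)(s'|s,a) V(s')`.
The Bellman equation of `V` under `T` is also a Bellman equation under the model `T̂`, for the
reward `r − γΔ`. Whenever `V` solves a Bellman equation for a reward `g` under a kernel `K`, the
per-step returns of `g` telescope, `γ^t E[g(s_t,a_t)] = γ^t E[V(s_t)] − γ^{t+1} E[V(s_{t+1})]`,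
so the return of `g` under `K` is `Σ_s d₀(s) V(s)`, which is the true return. Finally `Δ ≤ u`,
and the return is monotone in the reward. -/

lemma abs_sum_mul_le_of_abs_le {ι : Type*} [Fintype ι] (w f : ι → ℝ) {C : ℝ}
    (hf : ∀ i, |f i| ≤ C) : |∑ i, w i * f i| ≤ (∑ i, |w i|) * C := by
  calc |∑ i, w i * f i| ≤ ∑ i, |w i| * |f i| := by
        simpa only [abs_mul] using abs_sum_le_sum_abs (fun i => w i * f i) univ
    _ ≤ ∑ i, |w i| * C := by gcongr with i; exact hf i
    _ = (∑ i, |w i|) * C := (sum_mul ..).symm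

lemma summable_geometric_mul_of_abs_le {γ : ℝ} (hγ0 : 0 ≤ γ) (hγ1 : γ < 1) {c : ℕ → ℝ}
    {C : ℝ} (hc : ∀ t, |c t| ≤ C) : Summable fun t => γ ^ t * c t := by
  refine ((summable_geometric_of_lt_one hγ0 hγ1).mul_right C).of_norm_bounded fun t => ?_
  rw [Real.norm_eq_abs, abs_mul, abs_pow, abs_of_nonneg hγ0]
  exact mul_le_mul_of_nonneg_left (hc t) (pow_nonneg hγ0 t)

section MDP

variable {S A : Type} [Fintype S] [Fintype A] {K : S → A → S → ℝ} {π : S → A → ℝ}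

noncomputable def expectedReward (d0 : S → ℝ) (K : S → A → S → ℝ) (π : S → A → ℝ)
    (r : S → A → ℝ) (t : ℕ) : ℝ :=
  ∑ s, ∑ a, stateDist d0 K π t s * π s a * r s a

lemma Jinf_eq_tsum (d0 : S → ℝ) (r : S → A → ℝ) (γ : ℝ) :
    Jinf d0 K π r γ = ∑' t, γ ^ t * expectedReward d0 K π r t := rfl

lemma expectedReward_eq (d0 : S → ℝ) (r : S → A → ℝ) (t : ℕ) :
    expectedReward d0 K π r t = ∑ s, stateDist d0 K π t s * ∑ a, π s a * r s a := by
  simp only [expectedReward, mul_sum, mul_assoc]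

lemma sum_stateDist_one_mul (x f : S → ℝ) :
    ∑ s', stateDist x K π 1 s' * f s' = ∑ s, x s * ∑ a, π s a * ∑ s', K s a s' * f s' := by
  simp only [stateDist, sum_mul, mul_sum]
  rw [sum_comm]
  refine sum_congr rfl fun s _ => ?_
  rw [sum_comm]
  exact sum_congr rfl fun a _ => sum_congr rfl fun s' _ => by ring

lemma stateDist_add (d0 : S → ℝ) (m : ℕ) :
    ∀ n, stateDist d0 K π (m + n) = stateDist (stateDist d0 K π m) K π n
  | 0 => rfl
  | n + 1 => by
    ext s'
    rw [← add_assoc]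
    simp only [stateDist]
    rw [stateDist_add d0 m n]

lemma stateDist_eq_sum_mul [DecidableEq S] (d0 : S → ℝ) (t : ℕ) (s : S) :
    stateDist d0 K π t s
      = ∑ s0, d0 s0 * stateDist (fun s' => if s' = s0 then 1 else 0) K π t s := by
  induction t generalizing s with
  | zero => simp [stateDist]
  | succ t ih =>
    simp only [stateDist, ih, sum_mul, mul_sum]
    refine (sum_congr rfl fun s1 _ => sum_comm).trans (sum_comm.trans ?_)
    exact sum_congr rfl fun s0 _ => sum_congr rfl fun s1 _ => sum_congr rfl fun a _ => by ring

lemma stateDist_nonneg {d0 : S → ℝ} (hd0 : ∀ s, 0 ≤ d0 s) (hK : ∀ s a s', 0 ≤ K s a s')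
    (hπ : ∀ s a, 0 ≤ π s a) (t : ℕ) (s' : S) : 0 ≤ stateDist d0 K π t s' := by
  induction t generalizing s' with
  | zero => exact hd0 s'
  | succ t ih =>
    exact sum_nonneg fun s _ => sum_nonneg fun a _ =>
      mul_nonneg (mul_nonneg (ih s) (hπ s a)) (hK s a s')

lemma sum_abs_stateDist_one_le (hK : ∀ s a, K s a ∈ stdSimplex ℝ S)
    (hπ : ∀ s, π s ∈ stdSimplex ℝ A) (x : S → ℝ) :
    ∑ s, |stateDist x K π 1 s| ≤ ∑ s, |x s| :=
  calc ∑ s', |stateDist x K π 1 s'|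
      ≤ ∑ s', stateDist (fun s => |x s|) K π 1 s' * 1 := by
        refine sum_le_sum fun s' _ => ?_
        rw [mul_one]
        refine (abs_sum_le_sum_abs _ _).trans <| sum_le_sum fun s _ =>
          (abs_sum_le_sum_abs _ _).trans <| le_of_eq <| sum_congr rfl fun a _ => ?_
        rw [abs_mul, abs_mul, abs_of_nonneg ((hπ s).1 a), abs_of_nonneg ((hK s a).1 s')]
        rfl
    _ = ∑ s, |x s| := by
        rw [sum_stateDist_one_mul]
        simp [(hK _ _).2, (hπ _).2]

lemma sum_abs_stateDist_le_s19 (hK : ∀ s a, K s a ∈ stdSimplex ℝ S)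
    (hπ : ∀ s, π s ∈ stdSimplex ℝ A) (d0 : S → ℝ) (t : ℕ) :
    ∑ s, |stateDist d0 K π t s| ≤ ∑ s, |d0 s| := by
  induction t with
  | zero => rfl
  | succ t ih =>
    rw [stateDist_add d0 t 1]
    exact (sum_abs_stateDist_one_le hK hπ _).trans ih

lemma abs_expectedReward_le (hK : ∀ s a, K s a ∈ stdSimplex ℝ S)
    (hπ : ∀ s, π s ∈ stdSimplex ℝ A) (d0 : S → ℝ) (r : S → A → ℝ) (t : ℕ) :
    |expectedReward d0 K π r t| ≤ (∑ s, |d0 s|) * ‖r‖ := by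
  have hr : ∀ s a, |r s a| ≤ ‖r‖ := fun s a =>
    (Real.norm_eq_abs _ ▸ norm_le_pi_norm (r s) a).trans (norm_le_pi_norm r s)
  have hπr : ∀ s, |∑ a, π s a * r s a| ≤ ‖r‖ := fun s => by
    have h := abs_sum_mul_le_of_abs_le (π s) (r s) (hr s)
    rwa [sum_congr rfl fun a _ => abs_of_nonneg ((hπ s).1 a), (hπ s).2, one_mul] at h
  rw [expectedReward_eq]
  exact (abs_sum_mul_le_of_abs_le _ _ hπr).trans
    (mul_le_mul_of_nonneg_right (sum_abs_stateDist_le_s19 hK hπ d0 t) (norm_nonneg r))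

lemma summable_discounted_expectedReward (hK : ∀ s a, K s a ∈ stdSimplex ℝ S)
    (hπ : ∀ s, π s ∈ stdSimplex ℝ A) {γ : ℝ} (hγ0 : 0 ≤ γ) (hγ1 : γ < 1) (d0 : S → ℝ)
    (r : S → A → ℝ) : Summable fun t => γ ^ t * expectedReward d0 K π r t :=
  summable_geometric_mul_of_abs_le hγ0 hγ1 (abs_expectedReward_le hK hπ d0 r)

lemma Jinf_mono {d0 : S → ℝ} (hd0 : ∀ s, 0 ≤ d0 s) (hK : ∀ s a, K s a ∈ stdSimplex ℝ S)
    (hπ : ∀ s, π s ∈ stdSimplex ℝ A) {γ : ℝ} (hγ0 : 0 ≤ γ) (hγ1 : γ < 1)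
    {r r' : S → A → ℝ} (h : ∀ s a, r s a ≤ r' s a) : Jinf d0 K π r γ ≤ Jinf d0 K π r' γ := by
  refine Summable.tsum_le_tsum (fun t => ?_)
    (summable_discounted_expectedReward hK hπ hγ0 hγ1 d0 r)
    (summable_discounted_expectedReward hK hπ hγ0 hγ1 d0 r')
  gcongr with s _ a _
  · exact mul_nonneg
      (stateDist_nonneg hd0 (fun s a => (hK s a).1) (fun s => (hπ s).1) t s) ((hπ s).1 a)
  · exact h s a

lemma Jinf_eq_expectedReward_zero_add (hK : ∀ s a, K s a ∈ stdSimplex ℝ S)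
    (hπ : ∀ s, π s ∈ stdSimplex ℝ A) {γ : ℝ} (hγ0 : 0 ≤ γ) (hγ1 : γ < 1) (d0 : S → ℝ)
    (r : S → A → ℝ) :
    Jinf d0 K π r γ = expectedReward d0 K π r 0 + γ * Jinf (stateDist d0 K π 1) K π r γ := by
  rw [Jinf_eq_tsum, (summable_discounted_expectedReward hK hπ hγ0 hγ1 d0 r).tsum_eq_zero_add,
    Jinf_eq_tsum, ← tsum_mul_left, pow_zero, one_mul]
  congr 1
  refine tsum_congr fun t => ?_
  simp only [expectedReward, add_comm t 1, stateDist_add d0 1 t]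
  ring

lemma Jinf_eq_sum_mul_Vpi [DecidableEq S] (hK : ∀ s a, K s a ∈ stdSimplex ℝ S)
    (hπ : ∀ s, π s ∈ stdSimplex ℝ A) {γ : ℝ} (hγ0 : 0 ≤ γ) (hγ1 : γ < 1) (d0 : S → ℝ)
    (r : S → A → ℝ) : Jinf d0 K π r γ = ∑ s0, d0 s0 * Vpi K π r γ s0 := by
  simp only [Vpi, Jinf_eq_tsum, ← tsum_mul_left]
  rw [← Summable.tsum_finsetSum fun s0 _ =>
    (summable_discounted_expectedReward hK hπ hγ0 hγ1 _ r).mul_left (d0 s0)]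
  refine tsum_congr fun t => ?_
  simp only [expectedReward, stateDist_eq_sum_mul d0 t, sum_mul, mul_sum]
  refine (sum_congr rfl fun s _ => sum_comm).trans (sum_comm.trans ?_)
  exact sum_congr rfl fun s0 _ => sum_congr rfl fun s _ => sum_congr rfl fun a _ => by ring

lemma Vpi_bellman [DecidableEq S] (hK : ∀ s a, K s a ∈ stdSimplex ℝ S)
    (hπ : ∀ s, π s ∈ stdSimplex ℝ A) {γ : ℝ} (hγ0 : 0 ≤ γ) (hγ1 : γ < 1) (r : S → A → ℝ)
    (s : S) : Vpi K π r γ s = ∑ a, π s a * (r s a + γ * ∑ s', K s a s' * Vpi K π r γ s') := by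
  rw [Vpi, Jinf_eq_expectedReward_zero_add hK hπ hγ0 hγ1, Jinf_eq_sum_mul_Vpi hK hπ hγ0 hγ1,
    sum_stateDist_one_mul]
  simp [expectedReward, stateDist, mul_add, mul_sum, mul_left_comm, sum_add_distrib]

lemma Jinf_eq_of_bellman (hK : ∀ s a, K s a ∈ stdSimplex ℝ S)
    (hπ : ∀ s, π s ∈ stdSimplex ℝ A) {γ : ℝ} (hγ0 : 0 ≤ γ) (hγ1 : γ < 1) {g : S → A → ℝ}
    {V : S → ℝ} (hV : ∀ s, V s = ∑ a, π s a * (g s a + γ * ∑ s', K s a s' * V s'))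
    (d0 : S → ℝ) : Jinf d0 K π g γ = ∑ s, d0 s * V s := by
  set b : ℕ → ℝ := fun t => γ ^ t * ∑ s, stateDist d0 K π t s * V s with hb_def
  have hπg : ∀ s, ∑ a, π s a * g s a = V s - γ * ∑ a, π s a * ∑ s', K s a s' * V s' := by
    intro s
    rw [hV s, eq_sub_iff_add_eq, mul_sum, ← sum_add_distrib]
    exact sum_congr rfl fun a _ => by ring
  have htelescope : ∀ t, γ ^ t * expectedReward d0 K π g t = b t - b (t + 1) := by
    intro t
    simp only [hb_def]
    rw [stateDist_add d0 t 1, sum_stateDist_one_mul, expectedReward_eq]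
    simp only [hπg, mul_sub, sum_sub_distrib, mul_left_comm _ γ, ← mul_sum]
    ring
  have hb : Summable b := summable_geometric_mul_of_abs_le hγ0 hγ1 fun t =>
    (abs_sum_mul_le_of_abs_le _ _ fun s => norm_le_pi_norm V s).trans
      (mul_le_mul_of_nonneg_right (sum_abs_stateDist_le_s19 hK hπ d0 t) (norm_nonneg V))
  rw [Jinf_eq_tsum, tsum_congr htelescope, hb.tsum_sub ((summable_nat_add_iff 1).2 hb),
    hb.tsum_eq_zero_add]
  simp [hb_def, stateDist]

end MDP

theorem mopo_conservative_bound_general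
    {S A : Type} [Fintype S] [Fintype A] [DecidableEq S]
    (d0 : S → ℝ) (T That : S → A → S → ℝ) (π : S → A → ℝ)
    (r : S → A → ℝ) (γ : ℝ) (u : S → A → ℝ)
    (hγ0 : 0 < γ) (hγ1 : γ < 1)
    (hd00 : ∀ s, 0 ≤ d0 s)
    (hT0 : ∀ s a s', 0 ≤ T s a s') (hT1 : ∀ s a, ∑ s', T s a s' = 1)
    (hThat0 : ∀ s a s', 0 ≤ That s a s') (hThat1 : ∀ s a, ∑ s', That s a s' = 1)
    (hπ0 : ∀ s a, 0 ≤ π s a) (hπ1 : ∀ s, ∑ a, π s a = 1)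
    (hu : ∀ s a, |∑ s', (That s a s' - T s a s') * Vpi T π r γ s'| ≤ u s a) :
    Jinf d0 That π (fun s a => r s a - γ * u s a) γ ≤ Jinf d0 T π r γ := by
  have hT : ∀ s a, T s a ∈ stdSimplex ℝ S := fun s a => ⟨hT0 s a, hT1 s a⟩
  have hThat : ∀ s a, That s a ∈ stdSimplex ℝ S := fun s a => ⟨hThat0 s a, hThat1 s a⟩
  have hπ : ∀ s, π s ∈ stdSimplex ℝ A := fun s => ⟨hπ0 s, hπ1 s⟩
  set V := Vpi T π r γ
  have hV : ∀ s, V s = ∑ a, π s a *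
      ((r s a - γ * ∑ s', (That s a s' - T s a s') * V s') + γ * ∑ s', That s a s' * V s') :=
    fun s => (Vpi_bellman hT hπ hγ0.le hγ1 r s).trans <| sum_congr rfl fun a _ => by
      simp only [sub_mul, sum_sub_distrib]
      ring
  calc Jinf d0 That π (fun s a => r s a - γ * u s a) γ
      ≤ Jinf d0 That π (fun s a => r s a - γ * ∑ s', (That s a s' - T s a s') * V s') γ :=
        Jinf_mono hd00 hThat hπ hγ0.le hγ1 fun s a => by
          gcongr
          exact (le_abs_self _).trans (hu s a)
    _ = ∑ s, d0 s * V s := Jinf_eq_of_bellman hThat hπ hγ0.le hγ1 hV d0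
    _ = Jinf d0 T π r γ := (Jinf_eq_sum_mul_Vpi hT hπ hγ0.le hγ1 d0 r).symm

/-- **Conservative model-based guarantee underlying MOPO.**
If `u : S × A → ℝ≥0` is an error oracle satisfying
`|Σ_{s'} (T̂(s'|s,a) − T(s'|s,a))·V^π_T(s')| ≤ u(s,a)` for all `(s,a)`, then the return
of `π` in the model MDP with dynamics `T̂` and penalized reward
`r̃(s,a) = r(s,a) − γ·u(s,a)` lower-bounds the true return:
`J_{T̂,r̃}(π) ≤ J_{T,r}(π)`. -/
theorem mopo_conservative_bound
    {S A : Type} [Fintype S] [Fintype A] [DecidableEq S]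
    (d0 : S → ℝ) (T That : S → A → S → ℝ) (π : S → A → ℝ)
    (r : S → A → ℝ) (γ : ℝ) (u : S → A → ℝ)
    (hγ0 : 0 < γ) (hγ1 : γ < 1)
    (hd00 : ∀ s, 0 ≤ d0 s) (hd01 : ∑ s, d0 s = 1)
    (hT0 : ∀ s a s', 0 ≤ T s a s') (hT1 : ∀ s a, ∑ s', T s a s' = 1)
    (hThat0 : ∀ s a s', 0 ≤ That s a s') (hThat1 : ∀ s a, ∑ s', That s a s' = 1)
    (hπ0 : ∀ s a, 0 ≤ π s a) (hπ1 : ∀ s, ∑ a, π s a = 1)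
    (hu0 : ∀ s a, 0 ≤ u s a)
    (hu : ∀ s a, |∑ s', (That s a s' - T s a s') * Vpi T π r γ s'| ≤ u s a) :
    Jinf d0 That π (fun s a => r s a - γ * u s a) γ ≤ Jinf d0 T π r γ :=
  mopo_conservative_bound_general d0 T That π r γ u hγ0 hγ1 hd00 hT0 hT1 hThat0 hThat1 hπ0 hπ1 hu
end
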